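/- arXiv:1702.00611 — 4 statements merged into one kernel-verified Lean document; each statement's English description precedes it below -/
import Mathlib

section
/- Let n ≥ 1, 0 ≤ p ≤ q and u ∈ ℂ^{2n}. With γ_j = ((−1)^j/j!)·(q−p+1)!/((q−p+1+j)!), the symplectic projection of the bihomogeneous kernel is: ∑_{j=0}^{p} γ_j·(E)^j·(E†)^j (⟨z,ū⟩^p·⟨z̄,u⟩^q/(p!·q!)) = ((q−p+1)/(p!·(q+1)!))·⟨z̄,u⟩^{q−p}·(⟨z,ū⟩⟨z̄,u⟩ + ⟨z,u⟩_s·⟨z̄,ū⟩_s)^p, as an identity of polynomials in the z- and z̄-variables. -/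
open MvPolynomial

noncomputable section

/-- The inclusion `Fin n → Fin (2n)`, `j ↦ j`. -/
def il (n : ℕ) (j : Fin n) : Fin (2 * n) := ⟨j.1, by have := j.2; omega⟩

/-- The inclusion `Fin n → Fin (2n)`, `j ↦ n + j`. -/
def ir (n : ℕ) (j : Fin n) : Fin (2 * n) := ⟨n + j.1, by have := j.2; omega⟩

/-- Bihomogeneous of bidegree `(p,q)` on `ℂ^{2n}`
(variables `Sum.inl j = z_j`, `Sum.inr j = z̄_j`, `j : Fin 2n`). -/
def BiHom (n : ℕ) (P : MvPolynomial (Fin (2 * n) ⊕ Fin (2 * n)) ℂ) (p q : ℕ) : Prop :=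
  ∀ α ∈ P.support,
    (∑ j : Fin (2 * n), α (Sum.inl j)) = p ∧ (∑ j : Fin (2 * n), α (Sum.inr j)) = q

/-- The twisted Euler operator `E = ∑_{j=1}^n (z_j ∂_{z̄_{n+j}} − z_{n+j} ∂_{z̄_j})`. -/
def Eop (n : ℕ) (P : MvPolynomial (Fin (2 * n) ⊕ Fin (2 * n)) ℂ) :
    MvPolynomial (Fin (2 * n) ⊕ Fin (2 * n)) ℂ :=
  ∑ j : Fin n,
    (X (Sum.inl (il n j)) * pderiv (Sum.inr (ir n j)) P
      - X (Sum.inl (ir n j)) * pderiv (Sum.inr (il n j)) P)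

/-- The twisted Euler operator `E† = −∑_{j=1}^n (z̄_j ∂_{z_{n+j}} − z̄_{n+j} ∂_{z_j})`. -/
def Edag (n : ℕ) (P : MvPolynomial (Fin (2 * n) ⊕ Fin (2 * n)) ℂ) :
    MvPolynomial (Fin (2 * n) ⊕ Fin (2 * n)) ℂ :=
  -∑ j : Fin n,
    (X (Sum.inr (il n j)) * pderiv (Sum.inl (ir n j)) P
      - X (Sum.inr (ir n j)) * pderiv (Sum.inl (il n j)) P)


/-- The coefficients `γ_j = ((−1)^j/j!)·(q−p+1)!/((q−p+1+j)!)`. -/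
def gammaCoeff (p q j : ℕ) : ℂ :=
  ((-1 : ℂ) ^ j / (j.factorial : ℂ)) *
    (((q - p + 1).factorial : ℂ) / (((q - p + 1 + j).factorial : ℂ)))


/-- The polynomial `⟨z,ū⟩ = ∑_{j=1}^{2n} conj(u_j) z_j`. -/
def Apoly (n : ℕ) (u : Fin (2 * n) → ℂ) : MvPolynomial (Fin (2 * n) ⊕ Fin (2 * n)) ℂ :=
  ∑ j : Fin (2 * n), C ((starRingEnd ℂ) (u j)) * X (Sum.inl j)

/-- The polynomial `⟨z̄,u⟩ = ∑_{j=1}^{2n} u_j z̄_j`. -/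
def Bpoly (n : ℕ) (u : Fin (2 * n) → ℂ) : MvPolynomial (Fin (2 * n) ⊕ Fin (2 * n)) ℂ :=
  ∑ j : Fin (2 * n), C (u j) * X (Sum.inr j)

/-- The polynomial `⟨z,u⟩_s = ∑_{j=1}^{n} (z_j u_{n+j} − z_{n+j} u_j)`. -/
def Cpoly (n : ℕ) (u : Fin (2 * n) → ℂ) : MvPolynomial (Fin (2 * n) ⊕ Fin (2 * n)) ℂ :=
  ∑ j : Fin n,
    (C (u (ir n j)) * X (Sum.inl (il n j)) - C (u (il n j)) * X (Sum.inl (ir n j)))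

/-- The polynomial `⟨z̄,ū⟩_s = ∑_{j=1}^{n} (z̄_j conj(u_{n+j}) − z̄_{n+j} conj(u_j))`. -/
def Cbarpoly (n : ℕ) (u : Fin (2 * n) → ℂ) : MvPolynomial (Fin (2 * n) ⊕ Fin (2 * n)) ℂ :=
  ∑ j : Fin n,
    (C ((starRingEnd ℂ) (u (ir n j))) * X (Sum.inr (il n j))
      - C ((starRingEnd ℂ) (u (il n j))) * X (Sum.inr (ir n j)))

/-- The symplectic kernel
`Z^S_{p,q}(z,u) = ((q−p+1)/(p!(q+1)!)) ⟨z̄,u⟩^{q−p} (⟨z,ū⟩⟨z̄,u⟩ + ⟨z,u⟩_s ⟨z̄,ū⟩_s)^p`. -/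
def Zsymp (n p q : ℕ) (u : Fin (2 * n) → ℂ) : MvPolynomial (Fin (2 * n) ⊕ Fin (2 * n)) ℂ :=
  C ((((q - p + 1 : ℕ) : ℂ)) / ((p.factorial : ℂ) * ((q + 1).factorial : ℂ))) *
    Bpoly n u ^ (q - p) *
    (Apoly n u * Bpoly n u + Cpoly n u * Cbarpoly n u) ^ p

namespace Stmt8T

noncomputable def Kc (t i β δ : ℕ) : ℂ :=
  (-1)^i * (t.choose i) * (δ.descFactorial i) * (β.descFactorial (t-i))

lemma Kc_zero (t i β δ : ℕ) (h : t < i) : Kc t i β δ = 0 := by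
  simp [Kc, Nat.choose_eq_zero_of_lt h]

lemma Kc_succ_zero (t β δ : ℕ) :
    Kc (t+1) 0 β δ = Kc t 0 β δ * ((β-t : ℕ) : ℂ) := by
  simp only [Kc, Nat.choose_zero_right, Nat.descFactorial_zero, Nat.sub_zero,
    Nat.descFactorial_succ]
  push_cast
  ring

lemma Kc_succ_succ (t i' β δ : ℕ) (h : i' ≤ t) :
    Kc (t+1) (i'+1) β δ
      = Kc t (i'+1) β δ * ((β-(t-(i'+1)) : ℕ) : ℂ) - Kc t i' β δ * ((δ-i' : ℕ) : ℂ) := by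
  rcases Nat.lt_or_ge i' t with h' | h'
  · have e1 : t - (i'+1) + 1 = t - i' := by omega
    have e2 : t + 1 - (i'+1) = t - i' := by omega
    simp only [Kc, e2, Nat.choose_succ_succ, ← e1, Nat.descFactorial_succ]
    push_cast
    ring
  · have : i' = t := le_antisymm h h'
    subst this
    simp only [Kc, Nat.choose_succ_self_right, Nat.choose_self, Nat.sub_self,
      Nat.choose_succ_self, Nat.descFactorial_zero, Nat.descFactorial_succ,
      Nat.add_sub_cancel_left, Nat.add_sub_cancel]
    push_cast
    ring

lemma fact_ne (k : ℕ) : ((k.factorial : ℂ)) ≠ 0 := Nat.cast_ne_zero.mpr k.factorial_ne_zero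

noncomputable def gterm (N m P s : ℕ) : ℂ :=
  (-1)^s * (P.choose s) * ((m+s).factorial : ℂ) * (N.factorial : ℂ)
    / ((N+m+s+1).factorial : ℂ)

lemma gterm_succ (N m P s : ℕ) :
    gterm N m (P+1) (s+1) = gterm N (m+1) P s * (-1) + gterm N m P (s+1) := by
  simp only [gterm, Nat.choose_succ_succ, show m+1+s = m+(s+1) from by omega,
    show N+(m+1)+s+1 = N+m+(s+1)+1 from by omega]
  push_cast
  ring

lemma gterm_last (N m P : ℕ) : gterm N m P (P+1) = 0 := by
  simp [gterm, Nat.choose_succ_self]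

lemma gsum (N : ℕ) : ∀ P m : ℕ,
    ∑ s ∈ Finset.range (P+1), gterm N m P s
      = (m.factorial : ℂ) * ((N+P).factorial : ℂ) / ((N+P+m+1).factorial : ℂ) := by
  intro P
  induction P with
  | zero =>
    intro m
    simp [gterm]
  | succ P ih =>
    intro m
    rw [Finset.sum_range_succ']
    rw [Finset.sum_congr rfl (fun s _ => gterm_succ N m P s), Finset.sum_add_distrib]
    have h0 : gterm N m (P+1) 0 = gterm N m P 0 := by simp [gterm]
    have h2 : (∑ s ∈ Finset.range (P+1), gterm N m P (s+1)) + gterm N m P 0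
        = ∑ s ∈ Finset.range (P+2), gterm N m P s := (Finset.sum_range_succ' _ _).symm
    have h3 : ∑ s ∈ Finset.range (P+2), gterm N m P s
        = ∑ s ∈ Finset.range (P+1), gterm N m P s := by
      rw [Finset.sum_range_succ, gterm_last, add_zero]
    have h4 : ∑ s ∈ Finset.range (P+1), gterm N (m+1) P s * (-1)
        = -((m+1).factorial : ℂ) * ((N+P).factorial : ℂ) / ((N+P+(m+1)+1).factorial : ℂ) := by
      rw [← Finset.sum_mul, ih (m+1)]
      ring
    rw [h0, add_assoc, h2, h3, ih m, h4]
    have e1 : N+P+(m+1)+1 = (N+P+m+1)+1 := by omega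
    have e2 : N+(P+1) = (N+P)+1 := by omega
    have e3 : N+(P+1)+m+1 = (N+P+m+1)+1 := by omega
    rw [e1, e3, e2, Nat.factorial_succ (N+P+m+1), Nat.factorial_succ (N+P),
      Nat.factorial_succ m]
    have hne1 := fact_ne (N+P+m+1)
    have hne2 : ((N+P+m+1+1 : ℕ) : ℂ) ≠ 0 := Nat.cast_ne_zero.mpr (by omega)
    push_cast at hne1 hne2 ⊢
    field_simp
    ring

lemma triangle {M : Type*} [AddCommMonoid M] : ∀ (p : ℕ) (f : ℕ → ℕ → M),
    ∑ j ∈ Finset.range (p+1), ∑ i ∈ Finset.range (j+1), f j i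
      = ∑ m ∈ Finset.range (p+1), ∑ s ∈ Finset.range (p+1-m), f (m+s) s := by
  intro p
  induction p with
  | zero => simp
  | succ p ih =>
    intro f
    rw [Finset.sum_range_succ, ih f]
    have h1 : ∀ m ∈ Finset.range (p+1),
        ∑ s ∈ Finset.range (p+2-m), f (m+s) s
          = (∑ s ∈ Finset.range (p+1-m), f (m+s) s) + f (p+1) (p+1-m) := by
      intro m hm
      rw [Finset.mem_range] at hm
      have : p+2-m = (p+1-m)+1 := by omega
      rw [this, Finset.sum_range_succ]
      congr 2
      omega
    rw [Finset.sum_range_succ (fun m => ∑ s ∈ Finset.range (p+2-m), f (m+s) s),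
      Finset.sum_congr rfl h1, Finset.sum_add_distrib]
    have h2 : ∑ s ∈ Finset.range (p+2-(p+1)), f (p+1+s) s = f (p+1) 0 := by
      have : p+2-(p+1) = 1 := by omega
      rw [this, Finset.sum_range_one, add_zero]
    have h3 : ∑ m ∈ Finset.range (p+1), f (p+1) (p+1-m)
        = ∑ m ∈ Finset.range (p+1), f (p+1) (m+1) := by
      have := Finset.sum_range_reflect (fun i => f (p+1) (i+1)) (p+1)
      rw [← this]
      apply Finset.sum_congr rfl
      intro m hm
      rw [Finset.mem_range] at hm
      congr 1
      omega
    rw [h2, h3, Finset.sum_range_succ' (fun i => f (p+1) i) (p+1)]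
    abel

section Abstract
variable {R : Type*} [CommRing R] [Algebra ℂ R]

def Mono (a b c d : R) (α β γ δ : ℕ) : R := a^α * b^β * c^γ * d^δ

lemma derivD (D : Derivation ℂ R R) (a b c d : R)
    (ha : D a = 0) (hb : D b = c) (hc : D c = 0) (hd : D d = -a) (α β γ δ : ℕ) :
    D (Mono a b c d α β γ δ)
      = (β:ℂ) • Mono a b c d α (β-1) (γ+1) δ - (δ:ℂ) • Mono a b c d (α+1) β γ (δ-1) := by
  simp only [Mono, Derivation.leibniz, Derivation.leibniz_pow, ha, hb, hc, hd,
    smul_eq_mul, smul_zero, mul_zero, zero_add, add_zero, smul_neg, nsmul_eq_mul]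
  rw [Algebra.smul_def, Algebra.smul_def, map_natCast, map_natCast]
  ring

lemma derivDg (Dg : Derivation ℂ R R) (a b c d : R)
    (ga : Dg a = -d) (gb : Dg b = 0) (gc : Dg c = b) (gd : Dg d = 0) (α β γ δ : ℕ) :
    Dg (Mono a b c d α β γ δ)
      = (γ:ℂ) • Mono a b c d α (β+1) (γ-1) δ - (α:ℂ) • Mono a b c d (α-1) β γ (δ+1) := by
  simp only [Mono, Derivation.leibniz, Derivation.leibniz_pow, ga, gb, gc, gd,
    smul_eq_mul, smul_zero, mul_zero, zero_add, add_zero, smul_neg, nsmul_eq_mul]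
  rw [Algebra.smul_def, Algebra.smul_def, map_natCast, map_natCast]
  ring

lemma iterDg (Dg : Derivation ℂ R R) (a b c d : R)
    (ga : Dg a = -d) (gb : Dg b = 0) (gc : Dg c = b) (gd : Dg d = 0) (p q : ℕ) :
    ∀ j, j ≤ p → Dg^[j] (Mono a b c d p q 0 0)
      = (((-1)^j * (p.descFactorial j) : ℂ)) • Mono a b c d (p-j) q 0 j := by
  intro j
  induction j with
  | zero => simp
  | succ j ih =>
    intro hj
    rw [Function.iterate_succ_apply', ih (Nat.le_of_succ_le hj), Derivation.map_smul,
      derivDg Dg a b c d ga gb gc gd]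
    simp only [Nat.cast_zero, zero_smul, zero_sub, smul_neg, smul_smul]
    rw [← neg_smul]
    congr 1
    push_cast [Nat.descFactorial_succ]
    ring

lemma iterD (D : Derivation ℂ R R) (a b c d : R)
    (ha : D a = 0) (hb : D b = c) (hc : D c = 0) (hd : D d = -a) (α β δ : ℕ) :
    ∀ t, D^[t] (Mono a b c d α β 0 δ)
      = ∑ i ∈ Finset.range (t+1),
          Kc t i β δ • Mono a b c d (α+i) (β-(t-i)) (t-i) (δ-i) := by
  intro t
  induction t with
  | zero => simp [Kc]
  | succ t ih =>
    rw [Function.iterate_succ_apply', ih, map_sum]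
    have step : ∀ i ∈ Finset.range (t+1),
        D (Kc t i β δ • Mono a b c d (α+i) (β-(t-i)) (t-i) (δ-i))
        = (Kc t i β δ * ((β-(t-i):ℕ):ℂ)) • Mono a b c d (α+i) (β-(t+1-i)) (t+1-i) (δ-i)
          - (Kc t i β δ * ((δ-i:ℕ):ℂ)) •
              Mono a b c d (α+(i+1)) (β-(t+1-(i+1))) (t+1-(i+1)) (δ-(i+1)) := by
      intro i hi
      rw [Finset.mem_range] at hi
      rw [Derivation.map_smul, derivD D a b c d ha hb hc hd, smul_sub, smul_smul, smul_smul]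
      have h1 : β-(t-i)-1 = β-(t+1-i) := by omega
      have h2 : t-i+1 = t+1-i := by omega
      have h3 : α+i+1 = α+(i+1) := rfl
      have h4 : β-(t-i) = β-(t+1-(i+1)) := by omega
      have h5 : t-i = t+1-(i+1) := by omega
      have h6 : δ-i-1 = δ-(i+1) := by omega
      rw [h1, h2, h3, h4, h5, h6]
    rw [Finset.sum_congr rfl step, Finset.sum_sub_distrib]
    have key : ∀ i ∈ Finset.range (t+2),
        Kc (t+1) i β δ • Mono a b c d (α+i) (β-(t+1-i)) (t+1-i) (δ-i)
        = (Kc t i β δ * ((β-(t-i):ℕ):ℂ)) • Mono a b c d (α+i) (β-(t+1-i)) (t+1-i) (δ-i)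
          + (if i = 0 then 0 else -((Kc t (i-1) β δ * ((δ-(i-1):ℕ):ℂ)) •
                 Mono a b c d (α+i) (β-(t+1-i)) (t+1-i) (δ-i))) := by
      intro i hi
      rw [Finset.mem_range] at hi
      match i with
      | 0 =>
        rw [if_pos rfl, add_zero]
        simp only [Nat.sub_zero]
        rw [Kc_succ_zero, add_zero]
      | Nat.succ i' =>
        rw [if_neg (Nat.succ_ne_zero i'), Kc_succ_succ t i' β δ (by omega), sub_smul,
          sub_eq_add_neg]
        simp only [Nat.succ_sub_one]
    rw [Finset.sum_congr rfl key, Finset.sum_add_distrib, sub_eq_add_neg]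
    congr 1
    · conv_rhs => rw [Finset.sum_range_succ]
      rw [Kc_zero t (t+1) β δ (by omega), zero_mul, zero_smul, add_zero]
    · conv_rhs => rw [Finset.sum_range_succ']
      simp only [Nat.succ_ne_zero, if_false, if_pos, Nat.add_sub_cancel, if_true, add_zero,
        reduceIte]
      rw [Finset.sum_neg_distrib]


set_option maxHeartbeats 1000000 in
lemma coef_term (p q m s : ℕ) (hm : m ≤ p) (hpq : p ≤ q) (hs : s ≤ p - m) :
    gammaCoeff p q (m+s) * ((p.factorial : ℂ) * (q.factorial : ℂ))⁻¹
        * ((-1)^(m+s) * (p.descFactorial (m+s) : ℂ)) * Kc (m+s) s q (m+s)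
      = (((q-p+1 : ℕ) : ℂ) /
          (((p-m).factorial : ℂ) * (m.factorial : ℂ) * (m.factorial : ℂ) * ((q-m).factorial : ℂ)))
        * gterm (q-p) m (p-m) s := by
  have hms : m + s ≤ p := by omega
  have hA : (p.descFactorial (m+s) : ℂ) = (p.factorial : ℂ) / ((p - (m+s)).factorial : ℂ) := by
    rw [eq_div_iff (fact_ne _)]
    exact_mod_cast (Nat.mul_comm _ _).trans (Nat.factorial_mul_descFactorial hms)
  have hB : (((m+s).choose s : ℕ) : ℂ)
      = ((m+s).factorial : ℂ) / ((s.factorial : ℂ) * (m.factorial : ℂ)) := by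
    have h := Nat.choose_mul_factorial_mul_factorial (Nat.le_add_left s m)
    rw [Nat.add_sub_cancel] at h
    have h2 : (m+s).choose s * (s.factorial * m.factorial) = (m+s).factorial := by
      rw [← Nat.mul_assoc]; exact h
    rw [eq_div_iff (mul_ne_zero (fact_ne s) (fact_ne m))]
    exact_mod_cast h2
  have hC : (((m+s).descFactorial s : ℕ) : ℂ) = ((m+s).factorial : ℂ) / (m.factorial : ℂ) := by
    have h := Nat.factorial_mul_descFactorial (Nat.le_add_left s m)
    rw [Nat.add_sub_cancel] at h
    rw [eq_div_iff (fact_ne m)]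
    exact_mod_cast (Nat.mul_comm _ _).trans h
  have hD : ((q.descFactorial m : ℕ) : ℂ) = (q.factorial : ℂ) / ((q-m).factorial : ℂ) := by
    rw [eq_div_iff (fact_ne _)]
    exact_mod_cast (Nat.mul_comm _ _).trans (Nat.factorial_mul_descFactorial (by omega))
  have hE : (((p-m).choose s : ℕ) : ℂ)
      = ((p-m).factorial : ℂ) / ((s.factorial : ℂ) * ((p - (m+s)).factorial : ℂ)) := by
    have h := Nat.choose_mul_factorial_mul_factorial hs
    have e : p - m - s = p - (m+s) := by omega
    rw [e] at h
    have h2 : (p-m).choose s * (s.factorial * (p - (m+s)).factorial) = (p-m).factorial := by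
      rw [← Nat.mul_assoc]; exact h
    rw [eq_div_iff (mul_ne_zero (fact_ne s) (fact_ne _))]
    exact_mod_cast h2
  have e7 : q - p + 1 + (m+s) = (q-p) + m + s + 1 := by omega
  simp only [gammaCoeff, gterm, Kc, Nat.add_sub_cancel]
  rw [e7, Nat.factorial_succ (q-p), Nat.cast_mul, hA, hB, hC, hD, hE]
  generalize hQ1 : ((q - p + 1 : ℕ) : ℂ) = Q1 at *
  generalize hF1 : ((m+s).factorial : ℂ) = F1 at *
  generalize hF2 : (((q-p) + m + s + 1).factorial : ℂ) = F2 at *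
  generalize hF3 : (p.factorial : ℂ) = F3 at *
  generalize hF4 : (q.factorial : ℂ) = F4 at *
  generalize hF5 : ((p - (m+s)).factorial : ℂ) = F5 at *
  generalize hF6 : (s.factorial : ℂ) = F6 at *
  generalize hF7 : (m.factorial : ℂ) = F7 at *
  generalize hF8 : ((q-m).factorial : ℂ) = F8 at *
  generalize hF9 : ((p-m).factorial : ℂ) = F9 at *
  generalize hF10 : ((q-p).factorial : ℂ) = F10 at *
  have n1 : F1 ≠ 0 := hF1 ▸ fact_ne _
  have n2 : F2 ≠ 0 := hF2 ▸ fact_ne _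
  have n3 : F3 ≠ 0 := hF3 ▸ fact_ne _
  have n4 : F4 ≠ 0 := hF4 ▸ fact_ne _
  have n5 : F5 ≠ 0 := hF5 ▸ fact_ne _
  have n6 : F6 ≠ 0 := hF6 ▸ fact_ne _
  have n7 : F7 ≠ 0 := hF7 ▸ fact_ne _
  have n8 : F8 ≠ 0 := hF8 ▸ fact_ne _
  have n9 : F9 ≠ 0 := hF9 ▸ fact_ne _
  have dl : F1 * F2 * (F3 * F4) * F5 * (F6 * F7) * F7 * F8 ≠ 0 := by
    repeat' apply mul_ne_zero
    all_goals assumption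
  have dr : F9 * F7 * F7 * F8 * F6 * F5 * F2 ≠ 0 := by
    repeat' apply mul_ne_zero
    all_goals assumption
  rcases Nat.even_or_odd (m+s) with he | ho
  · rw [he.neg_one_pow]
    trans ((Q1 * F10 * F3 * F1 * F1 * F4 * (-1)^s) / (F1 * F2 * (F3 * F4) * F5 * (F6 * F7) * F7 * F8))
    · ring
    trans ((Q1 * (-1)^s * F9 * F1 * F10) / (F9 * F7 * F7 * F8 * F6 * F5 * F2))
    · rw [div_eq_div_iff dl dr]
      ring
    · ring
  · rw [ho.neg_one_pow]
    trans ((Q1 * F10 * F3 * F1 * F1 * F4 * (-1)^s) / (F1 * F2 * (F3 * F4) * F5 * (F6 * F7) * F7 * F8))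
    · ring
    trans ((Q1 * (-1)^s * F9 * F1 * F10) / (F9 * F7 * F7 * F8 * F6 * F5 * F2))
    · rw [div_eq_div_iff dl dr]
      ring
    · ring

lemma coef_sum (p q m : ℕ) (hm : m ≤ p) (hpq : p ≤ q) :
    ∑ s ∈ Finset.range (p-m+1),
        gammaCoeff p q (m+s) * ((p.factorial : ℂ) * (q.factorial : ℂ))⁻¹
          * ((-1)^(m+s) * (p.descFactorial (m+s) : ℂ)) * Kc (m+s) s q (m+s)
      = (((q-p+1 : ℕ) : ℂ) / ((p.factorial : ℂ) * ((q+1).factorial : ℂ)))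
          * ((p.choose m : ℕ) : ℂ) := by
  rw [Finset.sum_congr rfl (fun s hsm =>
    coef_term p q m s hm hpq (by have := Finset.mem_range.mp hsm; omega))]
  rw [← Finset.mul_sum, gsum (q-p) (p-m) m]
  have e1 : (q-p)+(p-m) = q-m := by omega
  have e2 : (q-p)+(p-m)+m+1 = q+1 := by omega
  rw [e2, e1]
  have hcm : ((p.choose m : ℕ) : ℂ)
      = (p.factorial : ℂ) / ((m.factorial : ℂ) * ((p-m).factorial : ℂ)) := by
    have h := Nat.choose_mul_factorial_mul_factorial hm
    have h2 : p.choose m * (m.factorial * (p-m).factorial) = p.factorial := by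
      rw [← Nat.mul_assoc]; exact h
    rw [eq_div_iff (mul_ne_zero (fact_ne m) (fact_ne _))]
    exact_mod_cast h2
  rw [hcm]
  generalize hQ1 : ((q - p + 1 : ℕ) : ℂ) = Q1 at *
  generalize hF1 : (m.factorial : ℂ) = F1 at *
  generalize hF2 : ((p-m).factorial : ℂ) = F2 at *
  generalize hF3 : ((q-m).factorial : ℂ) = F3 at *
  generalize hF4 : (p.factorial : ℂ) = F4 at *
  generalize hF5 : ((q+1).factorial : ℂ) = F5 at *
  have n1 : F1 ≠ 0 := hF1 ▸ fact_ne _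
  have n2 : F2 ≠ 0 := hF2 ▸ fact_ne _
  have n3 : F3 ≠ 0 := hF3 ▸ fact_ne _
  have n4 : F4 ≠ 0 := hF4 ▸ fact_ne _
  have n5 : F5 ≠ 0 := hF5 ▸ fact_ne _
  have dl : F2 * F1 * F1 * F3 * F5 ≠ 0 := by
    repeat' apply mul_ne_zero
    all_goals assumption
  have dr : F4 * F5 * (F1 * F2) ≠ 0 := by
    repeat' apply mul_ne_zero
    all_goals assumption
  trans ((Q1 * F1 * F3) / (F2 * F1 * F1 * F3 * F5))
  · ring
  trans ((Q1 * F4) / (F4 * F5 * (F1 * F2)))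
  · rw [div_eq_div_iff dl dr]
    ring
  · ring
lemma iter_smul (D : Derivation ℂ R R) (j : ℕ) (sc : ℂ) :
    ∀ x : R, D^[j] (sc • x) = sc • D^[j] x := by
  induction j with
  | zero => intro x; rfl
  | succ j ih =>
    intro x
    rw [Function.iterate_succ_apply, Derivation.map_smul, ih, Function.iterate_succ_apply]

theorem abstract_main (D Dg : Derivation ℂ R R) (a b c d : R)
    (ha : D a = 0) (hb : D b = c) (hc : D c = 0) (hd : D d = -a)
    (ga : Dg a = -d) (gb : Dg b = 0) (gc : Dg c = b) (gd : Dg d = 0)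
    (p q : ℕ) (hpq : p ≤ q) :
    ∑ j ∈ Finset.range (p+1), gammaCoeff p q j •
        (D^[j] (Dg^[j] ((((p.factorial : ℂ) * (q.factorial : ℂ))⁻¹) • (a^p * b^q))))
      = (((q-p+1 : ℕ) : ℂ) / ((p.factorial : ℂ) * ((q+1).factorial : ℂ))) •
          (b^(q-p) * (a*b+c*d)^p) := by
  have hM : a^p * b^q = Mono a b c d p q 0 0 := by simp [Mono]
  have main1 : ∀ j ∈ Finset.range (p+1),
      gammaCoeff p q j • (D^[j] (Dg^[j]
          ((((p.factorial : ℂ) * (q.factorial : ℂ))⁻¹) • Mono a b c d p q 0 0)))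
      = ∑ i ∈ Finset.range (j+1),
          (gammaCoeff p q j * ((p.factorial : ℂ) * (q.factorial : ℂ))⁻¹
            * ((-1)^j * (p.descFactorial j : ℂ)) * Kc j i q j) •
            Mono a b c d (p-j+i) (q-(j-i)) (j-i) (j-i) := by
    intro j hj
    rw [Finset.mem_range] at hj
    rw [iter_smul Dg j _ _, iterDg Dg a b c d ga gb gc gd p q j (by omega),
      iter_smul D j _ _, iter_smul D j _ _, iterD D a b c d ha hb hc hd (p-j) q j j,
      Finset.smul_sum, Finset.smul_sum, Finset.smul_sum]
    apply Finset.sum_congr rfl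
    intro i _
    rw [smul_smul, smul_smul, smul_smul]
  rw [hM, Finset.sum_congr rfl main1, triangle p]
  have main2 : ∀ m ∈ Finset.range (p+1),
      (∑ s ∈ Finset.range (p+1-m),
        (gammaCoeff p q (m+s) * ((p.factorial : ℂ) * (q.factorial : ℂ))⁻¹
          * ((-1)^(m+s) * (p.descFactorial (m+s) : ℂ)) * Kc (m+s) s q (m+s)) •
          Mono a b c d (p-(m+s)+s) (q-((m+s)-s)) ((m+s)-s) ((m+s)-s))
      = ((((q-p+1 : ℕ) : ℂ) / ((p.factorial : ℂ) * ((q+1).factorial : ℂ)))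
          * ((p.choose m : ℕ) : ℂ)) • Mono a b c d (p-m) (q-m) m m := by
    intro m hm
    rw [Finset.mem_range] at hm
    have e : p+1-m = p-m+1 := by omega
    rw [e]
    have hterm : ∀ s ∈ Finset.range (p-m+1),
        (gammaCoeff p q (m+s) * ((p.factorial : ℂ) * (q.factorial : ℂ))⁻¹
          * ((-1)^(m+s) * (p.descFactorial (m+s) : ℂ)) * Kc (m+s) s q (m+s)) •
          Mono a b c d (p-(m+s)+s) (q-((m+s)-s)) ((m+s)-s) ((m+s)-s)
        = (gammaCoeff p q (m+s) * ((p.factorial : ℂ) * (q.factorial : ℂ))⁻¹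
          * ((-1)^(m+s) * (p.descFactorial (m+s) : ℂ)) * Kc (m+s) s q (m+s)) •
          Mono a b c d (p-m) (q-m) m m := by
      intro s hs
      rw [Finset.mem_range] at hs
      have e1 : p-(m+s)+s = p-m := by omega
      have e2 : (m+s)-s = m := by omega
      rw [e1, e2]
    rw [Finset.sum_congr rfl hterm, ← Finset.sum_smul, coef_sum p q m (by omega) hpq]
  rw [Finset.sum_congr rfl main2]
  conv_rhs => rw [show a*b + c*d = c*d + a*b from by ring, add_pow, Finset.mul_sum,
    Finset.smul_sum]
  apply Finset.sum_congr rfl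
  intro m hm
  rw [Finset.mem_range] at hm
  have e3 : q - m = (q-p)+(p-m) := by omega
  simp only [Mono]
  rw [Algebra.smul_def, Algebra.smul_def, map_mul, map_natCast, e3, pow_add]
  ring

end Abstract

section Inst
open MvPolynomial
variable (n : ℕ) (u : Fin (2 * n) → ℂ)

lemma il_eq_il_iff (j k : Fin n) : il n j = il n k ↔ j = k := by
  constructor
  · intro h; rw [Fin.ext_iff] at h ⊢; simpa [il] using h
  · rintro rfl; rfl

lemma ir_eq_ir_iff (j k : Fin n) : ir n j = ir n k ↔ j = k := by
  constructor
  · intro h; rw [Fin.ext_iff] at h ⊢; simp only [ir] at h; omega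
  · rintro rfl; rfl

lemma il_ne_ir (j k : Fin n) : il n j ≠ ir n k := by
  intro h
  rw [Fin.ext_iff] at h
  have := j.2
  simp only [il, ir] at h
  omega

lemma ir_ne_il (j k : Fin n) : ir n j ≠ il n k := fun h => il_ne_ir n k j h.symm

lemma sum_split {M : Type*} [AddCommMonoid M] (g : Fin (2*n) → M) :
    ∑ j : Fin (2*n), g j = ∑ k : Fin n, g (il n k) + ∑ k : Fin n, g (ir n k) := by
  have e : n + n = 2*n := (two_mul n).symm
  have h1 : ∑ j : Fin (2*n), g j = ∑ j : Fin (n+n), g (Fin.cast e j) :=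
    (Fintype.sum_equiv (finCongr e) _ _ (fun i => rfl)).symm
  rw [h1, Fin.sum_univ_add]
  have hl : ∀ k : Fin n, Fin.cast e (Fin.castAdd n k) = il n k := fun k => Fin.ext rfl
  have hr : ∀ k : Fin n, Fin.cast e (Fin.natAdd n k) = ir n k := fun k => Fin.ext rfl
  simp only [hl, hr]

noncomputable def EopD : Derivation ℂ (MvPolynomial (Fin (2*n) ⊕ Fin (2*n)) ℂ)
    (MvPolynomial (Fin (2*n) ⊕ Fin (2*n)) ℂ) :=
  ∑ j : Fin n,
    ((X (Sum.inl (il n j)) : MvPolynomial (Fin (2*n) ⊕ Fin (2*n)) ℂ) • pderiv (Sum.inr (ir n j))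
      - (X (Sum.inl (ir n j)) : MvPolynomial (Fin (2*n) ⊕ Fin (2*n)) ℂ) • pderiv (Sum.inr (il n j)))

noncomputable def EdagD : Derivation ℂ (MvPolynomial (Fin (2*n) ⊕ Fin (2*n)) ℂ)
    (MvPolynomial (Fin (2*n) ⊕ Fin (2*n)) ℂ) :=
  -∑ j : Fin n,
    ((X (Sum.inr (il n j)) : MvPolynomial (Fin (2*n) ⊕ Fin (2*n)) ℂ) • pderiv (Sum.inl (ir n j))
      - (X (Sum.inr (ir n j)) : MvPolynomial (Fin (2*n) ⊕ Fin (2*n)) ℂ) • pderiv (Sum.inl (il n j)))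

lemma derSum_apply {R : Type*} [CommRing R] [Algebra ℂ R] {ι : Type*} (s : Finset ι)
    (Ds : ι → Derivation ℂ R R) (x : R) : (∑ i ∈ s, Ds i) x = ∑ i ∈ s, Ds i x := by
  induction s using Finset.cons_induction with
  | empty => simp
  | cons i s hi ih => rw [Finset.sum_cons, Derivation.add_apply, ih, Finset.sum_cons]

lemma Eop_eq (P : MvPolynomial (Fin (2*n) ⊕ Fin (2*n)) ℂ) : Eop n P = EopD n P := by
  rw [Eop, EopD, derSum_apply]
  refine Finset.sum_congr rfl fun j _ => ?_
  rw [Derivation.sub_apply, Derivation.smul_apply, Derivation.smul_apply,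
    smul_eq_mul, smul_eq_mul]

lemma Edag_eq (P : MvPolynomial (Fin (2*n) ⊕ Fin (2*n)) ℂ) : Edag n P = EdagD n P := by
  rw [Edag, EdagD, Derivation.neg_apply, derSum_apply]
  refine congrArg Neg.neg (Finset.sum_congr rfl fun j _ => ?_)
  simp [Derivation.sub_apply, Derivation.smul_apply, smul_eq_mul]

lemma pdA0 (v : Fin (2*n)) : pderiv (Sum.inr v) (Apoly n u) = 0 := by
  rw [Apoly, map_sum]
  apply Finset.sum_eq_zero
  intro j _
  rw [pderiv_C_mul, pderiv_X_of_ne (by simp), mul_zero]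

lemma pdB0 (v : Fin (2*n)) : pderiv (Sum.inl v) (Bpoly n u) = 0 := by
  rw [Bpoly, map_sum]
  apply Finset.sum_eq_zero
  intro j _
  rw [pderiv_C_mul, pderiv_X_of_ne (by simp), mul_zero]

lemma pdCp0 (v : Fin (2*n)) : pderiv (Sum.inr v) (Cpoly n u) = 0 := by
  rw [Cpoly, map_sum]
  apply Finset.sum_eq_zero
  intro j _
  rw [map_sub, pderiv_C_mul, pderiv_C_mul, pderiv_X_of_ne (by simp),
    pderiv_X_of_ne (by simp), mul_zero, mul_zero, sub_zero]

lemma pdCb0 (v : Fin (2*n)) : pderiv (Sum.inl v) (Cbarpoly n u) = 0 := by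
  rw [Cbarpoly, map_sum]
  apply Finset.sum_eq_zero
  intro j _
  rw [map_sub, pderiv_C_mul, pderiv_C_mul, pderiv_X_of_ne (by simp),
    pderiv_X_of_ne (by simp), mul_zero, mul_zero, sub_zero]

lemma pdB (v : Fin (2*n)) : pderiv (Sum.inr v) (Bpoly n u) = C (u v) := by
  rw [Bpoly, map_sum, Finset.sum_eq_single v]
  · rw [pderiv_C_mul, pderiv_X_self, mul_one]
  · intro b _ hb
    rw [pderiv_C_mul, pderiv_X_of_ne (by simpa using hb), mul_zero]
  · intro hv; exact absurd (Finset.mem_univ v) hv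

lemma pdA (v : Fin (2*n)) : pderiv (Sum.inl v) (Apoly n u) = C ((starRingEnd ℂ) (u v)) := by
  rw [Apoly, map_sum, Finset.sum_eq_single v]
  · rw [pderiv_C_mul, pderiv_X_self, mul_one]
  · intro b _ hb
    rw [pderiv_C_mul, pderiv_X_of_ne (by simpa using hb), mul_zero]
  · intro hv; exact absurd (Finset.mem_univ v) hv

lemma pdCb_il (k : Fin n) :
    pderiv (Sum.inr (il n k)) (Cbarpoly n u) = C ((starRingEnd ℂ) (u (ir n k))) := by
  rw [Cbarpoly, map_sum, Finset.sum_eq_single k]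
  · rw [map_sub, pderiv_C_mul, pderiv_C_mul, pderiv_X_self,
      pderiv_X_of_ne (by simp [ir_ne_il n k k]), mul_one, mul_zero, sub_zero]
  · intro b _ hb
    rw [map_sub, pderiv_C_mul, pderiv_C_mul,
      pderiv_X_of_ne (by simp [(il_eq_il_iff n b k).not.mpr hb]),
      pderiv_X_of_ne (by simp [ir_ne_il n b k]), mul_zero, mul_zero, sub_zero]
  · intro hv; exact absurd (Finset.mem_univ k) hv

lemma pdCb_ir (k : Fin n) :
    pderiv (Sum.inr (ir n k)) (Cbarpoly n u) = -C ((starRingEnd ℂ) (u (il n k))) := by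
  rw [Cbarpoly, map_sum, Finset.sum_eq_single k]
  · rw [map_sub, pderiv_C_mul, pderiv_C_mul, pderiv_X_self,
      pderiv_X_of_ne (by simp [il_ne_ir n k k]), mul_one, mul_zero, zero_sub]
  · intro b _ hb
    rw [map_sub, pderiv_C_mul, pderiv_C_mul,
      pderiv_X_of_ne (by simp [il_ne_ir n b k]),
      pderiv_X_of_ne (by simp [(ir_eq_ir_iff n b k).not.mpr hb]), mul_zero, mul_zero, sub_zero]
  · intro hv; exact absurd (Finset.mem_univ k) hv

lemma pdCp_il (k : Fin n) :
    pderiv (Sum.inl (il n k)) (Cpoly n u) = C (u (ir n k)) := by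
  rw [Cpoly, map_sum, Finset.sum_eq_single k]
  · rw [map_sub, pderiv_C_mul, pderiv_C_mul, pderiv_X_self,
      pderiv_X_of_ne (by simp [ir_ne_il n k k]), mul_one, mul_zero, sub_zero]
  · intro b _ hb
    rw [map_sub, pderiv_C_mul, pderiv_C_mul,
      pderiv_X_of_ne (by simp [(il_eq_il_iff n b k).not.mpr hb]),
      pderiv_X_of_ne (by simp [ir_ne_il n b k]), mul_zero, mul_zero, sub_zero]
  · intro hv; exact absurd (Finset.mem_univ k) hv

lemma pdCp_ir (k : Fin n) :
    pderiv (Sum.inl (ir n k)) (Cpoly n u) = -C (u (il n k)) := by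
  rw [Cpoly, map_sum, Finset.sum_eq_single k]
  · rw [map_sub, pderiv_C_mul, pderiv_C_mul, pderiv_X_self,
      pderiv_X_of_ne (by simp [il_ne_ir n k k]), mul_one, mul_zero, zero_sub]
  · intro b _ hb
    rw [map_sub, pderiv_C_mul, pderiv_C_mul,
      pderiv_X_of_ne (by simp [il_ne_ir n b k]),
      pderiv_X_of_ne (by simp [(ir_eq_ir_iff n b k).not.mpr hb]), mul_zero, mul_zero, sub_zero]
  · intro hv; exact absurd (Finset.mem_univ k) hv

lemma EopD_A : EopD n (Apoly n u) = 0 := by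
  rw [← Eop_eq, Eop]
  apply Finset.sum_eq_zero
  intro j _
  rw [pdA0, pdA0, mul_zero, mul_zero, sub_zero]

lemma EopD_Cp : EopD n (Cpoly n u) = 0 := by
  rw [← Eop_eq, Eop]
  apply Finset.sum_eq_zero
  intro j _
  rw [pdCp0, pdCp0, mul_zero, mul_zero, sub_zero]

lemma EopD_B : EopD n (Bpoly n u) = Cpoly n u := by
  rw [← Eop_eq, Eop, Cpoly]
  refine Finset.sum_congr rfl fun j _ => ?_
  rw [pdB, pdB]
  ring

lemma EopD_Cb : EopD n (Cbarpoly n u) = -Apoly n u := by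
  rw [← Eop_eq, Eop]
  have h1 : ∀ j ∈ (Finset.univ : Finset (Fin n)),
      X (Sum.inl (il n j)) * pderiv (Sum.inr (ir n j)) (Cbarpoly n u)
        - X (Sum.inl (ir n j)) * pderiv (Sum.inr (il n j)) (Cbarpoly n u)
      = -(C ((starRingEnd ℂ) (u (il n j))) * X (Sum.inl (il n j))
          + C ((starRingEnd ℂ) (u (ir n j))) * X (Sum.inl (ir n j))) := by
    intro j _
    rw [pdCb_ir, pdCb_il]
    ring
  rw [Finset.sum_congr rfl h1, Finset.sum_neg_distrib, Finset.sum_add_distrib]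
  rw [Apoly, sum_split n (fun v => C ((starRingEnd ℂ) (u v)) * X (Sum.inl v))]

lemma EdagD_B : EdagD n (Bpoly n u) = 0 := by
  rw [← Edag_eq, Edag, neg_eq_zero]
  apply Finset.sum_eq_zero
  intro j _
  rw [pdB0, pdB0, mul_zero, mul_zero, sub_zero]

lemma EdagD_Cb : EdagD n (Cbarpoly n u) = 0 := by
  rw [← Edag_eq, Edag, neg_eq_zero]
  apply Finset.sum_eq_zero
  intro j _
  rw [pdCb0, pdCb0, mul_zero, mul_zero, sub_zero]

lemma EdagD_A : EdagD n (Apoly n u) = -Cbarpoly n u := by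
  rw [← Edag_eq, Edag, neg_inj, Cbarpoly]
  refine Finset.sum_congr rfl fun j _ => ?_
  rw [pdA, pdA]
  ring

lemma EdagD_Cp : EdagD n (Cpoly n u) = Bpoly n u := by
  rw [← Edag_eq, Edag]
  have h1 : ∀ j ∈ (Finset.univ : Finset (Fin n)),
      X (Sum.inr (il n j)) * pderiv (Sum.inl (ir n j)) (Cpoly n u)
        - X (Sum.inr (ir n j)) * pderiv (Sum.inl (il n j)) (Cpoly n u)
      = -(C (u (il n j)) * X (Sum.inr (il n j)) + C (u (ir n j)) * X (Sum.inr (ir n j))) := by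
    intro j _
    rw [pdCp_ir, pdCp_il]
    ring
  rw [Finset.sum_congr rfl h1, Finset.sum_neg_distrib, neg_neg, Finset.sum_add_distrib,
    Bpoly, sum_split n (fun v => C (u v) * X (Sum.inr v))]

end Inst

end Stmt8T

theorem statement8 (n p q : ℕ) (hn : 1 ≤ n) (hpq : p ≤ q) (u : Fin (2 * n) → ℂ) :
    (∑ j ∈ Finset.range (p + 1),
        C (gammaCoeff p q j) *
          (Eop n)^[j] ((Edag n)^[j]
            (C (((p.factorial : ℂ) * (q.factorial : ℂ))⁻¹) * Apoly n u ^ p * Bpoly n u ^ q)))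
      = Zsymp n p q u := by
  have hE : Eop n = ⇑(Stmt8T.EopD n) := funext fun P => Stmt8T.Eop_eq n P
  have hEd : Edag n = ⇑(Stmt8T.EdagD n) := funext fun P => Stmt8T.Edag_eq n P
  rw [Zsymp]
  simp only [mul_assoc]
  simp only [← smul_eq_C_mul]
  rw [hE, hEd]
  exact Stmt8T.abstract_main (Stmt8T.EopD n) (Stmt8T.EdagD n)
    (Apoly n u) (Bpoly n u) (Cpoly n u) (Cbarpoly n u)
    (Stmt8T.EopD_A n u) (Stmt8T.EopD_B n u) (Stmt8T.EopD_Cp n u) (Stmt8T.EopD_Cb n u)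
    (Stmt8T.EdagD_A n u) (Stmt8T.EdagD_B n u) (Stmt8T.EdagD_Cp n u) (Stmt8T.EdagD_Cb n u)
    p q hpq


end
end

section
/- Let n ≥ 1, 0 ≤ p ≤ q and u ∈ ℂ^{2n}. Then for every 0 ≤ k ≤ p and every symplectic homogeneous polynomial R ∈ R_{p−k,q+k}, one has ⟨Z^S_{p,q}(·,u), (E)^k R⟩_∂ = δ_{k0}·R(u); i.e., Z^S_{p,q} is the reproducing kernel of R_{p,q} with respect to the Fischer inner product. -/
open MvPolynomial

noncomputable section

/-- The complex Fischer inner product, antilinear in the first argument, determined on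
monomials by `⟨z^α z̄^β, z^γ z̄^δ⟩_∂ = α! β! δ_{αγ} δ_{βδ}`. -/
def fischer {σ : Type*} (P Q : MvPolynomial σ ℂ) : ℂ :=
  ∑ α ∈ Q.support,
    (starRingEnd ℂ) (P.coeff α) * Q.coeff α * α.prod (fun _ k => (k.factorial : ℂ))

/-!
Multiplication by `X i` is Fischer-adjoint to `∂/∂X i`. Writing `Z^S_{p,q} = c B^{q-p} W^p` with
`B = ⟨z̄,u⟩` and `W = ⟨z,ū⟩⟨z̄,u⟩ + ⟨z,u⟩_s⟨z̄,ū⟩_s`, the pairing `⟨Z^S_{p,q}, S⟩_∂` is therefore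
`c` times the constant term of `Δ^p D_B^{q-p} S`, where `D_B` and `Δ = D_A D_B + D_C D_C̄` are the
adjoint differential operators. Both commute with `E`, and the image of `E` has no constant term:
this is the case `k > 0`. For `k = 0`, `D_B^{q-p} Δ^p R` has bidegree `(0,0)`, so its constant
term is its value at `u`. By Euler's identity `D_A` and `D_B` act on values at `u` as multiplication
by the `z`- and `z̄`-degree, and when `E†R = 0` the commutator `[D_C̄, E†] = -D_A` makes `D_C D_C̄`
act as `D_A` as well. So `Δ` multiplies the value at `u` by `a(b+1)` in bidegree `(a,b)`, and the
resulting factorials cancel `c`.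
-/

open ComplexConjugate

namespace SymplecticKernel

section Operators

variable {R σ ι κ : Type*} [CommRing R]

theorem pderiv_pderiv_comm (i j : σ) (P : MvPolynomial σ R) :
    pderiv i (pderiv j P) = pderiv j (pderiv i P) := by
  classical
  induction P using MvPolynomial.induction_on' with
  | add P Q hP hQ => simp only [map_add, hP, hQ]
  | monomial α a =>
    obtain rfl | hij := eq_or_ne i j
    · rfl
    have hi : (α - Finsupp.single j 1 : σ →₀ ℕ) i = α i := by simp [hij.symm]
    have hj : (α - Finsupp.single i 1 : σ →₀ ℕ) j = α j := by simp [hij]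
    rw [pderiv_monomial, pderiv_monomial, pderiv_monomial, pderiv_monomial, hi, hj,
      tsub_right_comm, mul_right_comm a]

variable [Fintype ι] [Fintype κ]

def dirDeriv (c : ι → R) (v : ι → σ) : MvPolynomial σ R →ₗ[R] MvPolynomial σ R :=
  ∑ x, c x • (pderiv (v x)).toLinearMap

def linForm (c : ι → R) (v : ι → σ) : MvPolynomial σ R :=
  ∑ x, C (c x) * X (v x)

def linVectorField (d : κ → R) (a b : κ → σ) : MvPolynomial σ R →ₗ[R] MvPolynomial σ R :=
  ∑ y, d y • LinearMap.mulLeft R (X (a y)) ∘ₗ (pderiv (b y)).toLinearMap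

theorem dirDeriv_apply (c : ι → R) (v : ι → σ) (P : MvPolynomial σ R) :
    dirDeriv c v P = ∑ x, c x • pderiv (v x) P := by
  simp [dirDeriv]

theorem linVectorField_apply (d : κ → R) (a b : κ → σ) (P : MvPolynomial σ R) :
    linVectorField d a b P = ∑ y, d y • (X (a y) * pderiv (b y) P) := by
  simp [linVectorField]

theorem dirDeriv_comm (c : ι → R) (v : ι → σ) (d : κ → R) (w : κ → σ) (P : MvPolynomial σ R) :
    dirDeriv c v (dirDeriv d w P) = dirDeriv d w (dirDeriv c v P) := by
  simp only [dirDeriv_apply, map_sum, map_smul, Finset.smul_sum, smul_smul]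
  rw [Finset.sum_comm]
  simp only [mul_comm (c _), pderiv_pderiv_comm (v _)]

open Classical in
theorem dirDeriv_linVectorField (c : ι → R) (v : ι → σ) (d : κ → R) (a b : κ → σ)
    (P : MvPolynomial σ R) :
    dirDeriv c v (linVectorField d a b P) = linVectorField d a b (dirDeriv c v P)
      + ∑ y, ((∑ x, if a y = v x then c x else 0) * d y) • pderiv (b y) P := by
  simp only [dirDeriv_apply, linVectorField_apply, map_sum, map_smul, pderiv_mul, pderiv_X,
    Pi.single_apply, smul_add, Finset.sum_add_distrib, Finset.smul_sum, smul_smul]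
  rw [add_comm]
  congr 1
  · rw [Finset.sum_comm]
    simp only [mul_comm (c _), pderiv_pderiv_comm (v _)]
  · simp only [Finset.sum_mul, Finset.sum_smul, ite_mul, zero_mul, one_mul, ite_smul,
      zero_smul, smul_ite, smul_zero, mul_comm (d _)]

theorem _root_.MvPolynomial.IsWeightedHomogeneous.dirDeriv {M : Type*} [AddCancelCommMonoid M]
    {w : σ → M} {m m' : M} {P : MvPolynomial σ R} (hP : P.IsWeightedHomogeneous w m)
    (c : ι → R) {v : ι → σ} (hv : ∀ x, m' + w (v x) = m) :
    (dirDeriv c v P).IsWeightedHomogeneous w m' := by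
  rw [dirDeriv_apply]
  exact IsWeightedHomogeneous.sum _ _ _ fun x _ =>
    (weightedHomogeneousSubmodule R w m').smul_mem _ (hP.pderiv (hv x))

theorem _root_.MvPolynomial.IsWeightedHomogeneous.iterate {M : Type*} [AddCommMonoid M]
    {w : σ → M} {e m m' : M} {P : MvPolynomial σ R} (hP : P.IsWeightedHomogeneous w m')
    {f : MvPolynomial σ R → MvPolynomial σ R}
    (hf : ∀ {m P}, P.IsWeightedHomogeneous w (m + e) → (f P).IsWeightedHomogeneous w m)
    (k : ℕ) (hm : m + k • e = m') : (f^[k] P).IsWeightedHomogeneous w m := by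
  induction k generalizing P m' with
  | zero => simpa [← hm] using hP
  | succ k ih =>
    rw [succ_nsmul, ← add_assoc] at hm
    subst hm
    exact ih (hf hP) rfl

theorem _root_.MvPolynomial.IsWeightedHomogeneous.eval_sum_weight_mul_pderiv [Fintype σ]
    {w : σ → ℕ} {m : ℕ} {P : MvPolynomial σ R} (hP : P.IsWeightedHomogeneous w m)
    (z : σ → R) : ∑ i, w i * z i * eval z (pderiv i P) = m * eval z P := by
  simpa [nsmul_eq_mul, mul_assoc] using congrArg (eval z) hP.sum_weight_X_mul_pderiv

end Operators

section Fischer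

variable {σ ι : Type*}

theorem fischer_eq_sum_support_left (P Q : MvPolynomial σ ℂ) :
    fischer P Q = ∑ α ∈ P.support,
      conj (P.coeff α) * Q.coeff α * α.prod (fun _ k => (k.factorial : ℂ)) := by
  classical
  rw [fischer, Finset.sum_subset (Finset.subset_union_right (s₁ := P.support)),
    ← Finset.sum_subset (Finset.subset_union_left (s₂ := Q.support))] <;>
  · intro α _ hα
    simp [notMem_support_iff.mp hα]

theorem fischer_add_left (P₁ P₂ Q : MvPolynomial σ ℂ) :
    fischer (P₁ + P₂) Q = fischer P₁ Q + fischer P₂ Q := by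
  simp only [fischer, coeff_add, map_add, add_mul, Finset.sum_add_distrib]

theorem fischer_smul_left (c : ℂ) (P Q : MvPolynomial σ ℂ) :
    fischer (c • P) Q = conj c * fischer P Q := by
  simp only [fischer, coeff_smul, smul_eq_mul, map_mul, Finset.mul_sum, mul_assoc]

theorem fischer_add_right (P Q₁ Q₂ : MvPolynomial σ ℂ) :
    fischer P (Q₁ + Q₂) = fischer P Q₁ + fischer P Q₂ := by
  simp only [fischer_eq_sum_support_left P, coeff_add, mul_add, add_mul, Finset.sum_add_distrib]

theorem fischer_smul_right (c : ℂ) (P Q : MvPolynomial σ ℂ) :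
    fischer P (c • Q) = c * fischer P Q := by
  simp only [fischer_eq_sum_support_left P, coeff_smul, smul_eq_mul, Finset.mul_sum]
  exact Finset.sum_congr rfl fun _ _ => by ring

theorem fischer_sum_left (s : Finset ι) (P : ι → MvPolynomial σ ℂ) (Q : MvPolynomial σ ℂ) :
    fischer (∑ x ∈ s, P x) Q = ∑ x ∈ s, fischer (P x) Q :=
  map_sum (AddMonoidHom.mk' (fischer · Q) (fischer_add_left · · Q)) P s

theorem fischer_sum_right (s : Finset ι) (P : MvPolynomial σ ℂ) (Q : ι → MvPolynomial σ ℂ) :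
    fischer P (∑ x ∈ s, Q x) = ∑ x ∈ s, fischer P (Q x) :=
  map_sum (AddMonoidHom.mk' (fischer P) (fischer_add_right P)) Q s

theorem prod_factorial_single_add (β : σ →₀ ℕ) (i : σ) :
    (Finsupp.single i 1 + β).prod (fun _ k => (k.factorial : ℂ))
      = (β i + 1) * β.prod (fun _ k => (k.factorial : ℂ)) := by
  classical
  rw [← Finsupp.mul_prod_erase' _ i _ (by simp), ← Finsupp.mul_prod_erase' β i _ (by simp),
    Finsupp.erase_add, Finsupp.erase_single, zero_add]
  simp [Nat.factorial_succ, add_comm 1, mul_assoc]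

theorem fischer_X_mul (i : σ) (P Q : MvPolynomial σ ℂ) :
    fischer (X i * P) Q = fischer P (pderiv i Q) := by
  rw [fischer_eq_sum_support_left, fischer_eq_sum_support_left, support_X_mul, Finset.sum_map]
  refine Finset.sum_congr rfl fun β _ => ?_
  simp only [addLeftEmbedding_apply, coeff_X_mul, coeff_pderiv, prod_factorial_single_add]
  rw [add_comm (Finsupp.single i 1)]
  ring

theorem fischer_one_left (Q : MvPolynomial σ ℂ) : fischer 1 Q = constantCoeff Q := by
  classical
  rw [fischer_eq_sum_support_left, support_one]
  simp [constantCoeff_eq]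

theorem fischer_linForm_mul [Fintype ι] (c : ι → ℂ) (v : ι → σ) (P Q : MvPolynomial σ ℂ) :
    fischer (linForm c v * P) Q = fischer P (dirDeriv (fun x => conj (c x)) v Q) := by
  simp only [linForm, Finset.sum_mul, fischer_sum_left, dirDeriv_apply, fischer_sum_right,
    ← smul_eq_C_mul, smul_mul_assoc, fischer_smul_left, fischer_smul_right, fischer_X_mul]

theorem fischer_pow_mul_of_adjoint {L : MvPolynomial σ ℂ}
    {f : MvPolynomial σ ℂ → MvPolynomial σ ℂ} (hf : ∀ P Q, fischer (L * P) Q = fischer P (f Q))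
    (k : ℕ) (P Q : MvPolynomial σ ℂ) : fischer (L ^ k * P) Q = fischer P (f^[k] Q) := by
  induction k generalizing P with
  | zero => rw [pow_zero, one_mul, Function.iterate_zero_apply]
  | succ k ih => rw [pow_succ, mul_assoc, ih, hf, Function.iterate_succ_apply']

end Fischer

section Symplectic

variable {n : ℕ}

abbrev Poly (n : ℕ) := MvPolynomial (Fin (2 * n) ⊕ Fin (2 * n)) ℂ

/-- `⟨z,u⟩_s = ∑ x, symplCoeff u x * z_{symplVar n x}`. -/
def symplVar (n : ℕ) : Fin n ⊕ Fin n → Fin (2 * n) := Sum.elim (il n) (ir n)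

def symplCoeff (u : Fin (2 * n) → ℂ) : Fin n ⊕ Fin n → ℂ :=
  Sum.elim (fun j => u (ir n j)) (fun j => -u (il n j))

@[simp]
theorem symplCoeff_inl (u : Fin (2 * n) → ℂ) (j : Fin n) : symplCoeff u (Sum.inl j) = u (ir n j) :=
  rfl

@[simp]
theorem symplCoeff_inr (u : Fin (2 * n) → ℂ) (j : Fin n) :
    symplCoeff u (Sum.inr j) = -u (il n j) :=
  rfl

theorem symplVar_bijective : Function.Bijective (symplVar n) := by
  refine (Fintype.bijective_iff_injective_and_card _).mpr ⟨?_, by simp [two_mul]⟩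
  rintro (i | i) (j | j) h <;> simp [symplVar, il, ir, Fin.ext_iff] at h ⊢ <;> omega

@[simp]
theorem symplVar_inl (j : Fin n) : symplVar n (Sum.inl j) = il n j := rfl

@[simp]
theorem symplVar_inr (j : Fin n) : symplVar n (Sum.inr j) = ir n j := rfl

theorem sum_comp_symplVar {M : Type*} [AddCommMonoid M] (f : Fin (2 * n) → M) :
    ∑ x, f (symplVar n x) = ∑ i, f i :=
  Fintype.sum_bijective _ symplVar_bijective _ _ fun _ => rfl

theorem Eop_eq_linVectorField (P : Poly n) :
    Eop n P = linVectorField (Sum.elim 1 (-1)) (Sum.inl ∘ symplVar n)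
      (Sum.inr ∘ symplVar n ∘ Sum.swap) P := by
  simp [Eop, linVectorField_apply, Fintype.sum_sum_type, symplVar, sub_eq_add_neg,
    Finset.sum_add_distrib]

theorem Edag_eq_linVectorField (P : Poly n) :
    Edag n P = linVectorField (Sum.elim 1 (-1)) (Sum.inr ∘ symplVar n ∘ Sum.swap)
      (Sum.inl ∘ symplVar n) P := by
  simp [Edag, linVectorField_apply, Fintype.sum_sum_type, symplVar, sub_eq_add_neg,
    Finset.sum_add_distrib, add_comm]

def Wpoly (n : ℕ) (u : Fin (2 * n) → ℂ) : Poly n :=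
  Apoly n u * Bpoly n u + Cpoly n u * Cbarpoly n u

variable (u : Fin (2 * n) → ℂ)

/-- `derivA`, `derivB`, `derivC`, `derivCbar` and `derivW` are the Fischer adjoints of
multiplication by `Apoly`, `Bpoly`, `Cpoly`, `Cbarpoly` and `Wpoly`. -/
def derivA : Poly n →ₗ[ℂ] Poly n := dirDeriv u Sum.inl

def derivB : Poly n →ₗ[ℂ] Poly n := dirDeriv (fun j => conj (u j)) Sum.inr

def derivC : Poly n →ₗ[ℂ] Poly n :=
  dirDeriv (fun x => conj (symplCoeff u x)) (Sum.inl ∘ symplVar n)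

def derivCbar : Poly n →ₗ[ℂ] Poly n := dirDeriv (symplCoeff u) (Sum.inr ∘ symplVar n)

def derivW : Poly n →ₗ[ℂ] Poly n := derivA u ∘ₗ derivB u + derivC u ∘ₗ derivCbar u

theorem derivA_Eop (P : Poly n) : derivA u (Eop n P) = Eop n (derivA u P) - derivCbar u P := by
  rw [Eop_eq_linVectorField, Eop_eq_linVectorField, derivA, dirDeriv_linVectorField,
    sub_eq_add_neg, add_right_inj, derivCbar, dirDeriv_apply, ← Finset.sum_neg_distrib,
    ← (Equiv.sumComm _ _).sum_comp]
  simp only [Function.comp_apply, Sum.inl.injEq, Finset.sum_ite_eq, Finset.mem_univ, if_true]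
  refine Fintype.sum_congr _ _ ?_
  rintro (j | j) <;> simp

theorem derivB_Eop (P : Poly n) : derivB u (Eop n P) = Eop n (derivB u P) := by
  rw [Eop_eq_linVectorField, Eop_eq_linVectorField, derivB, dirDeriv_linVectorField]
  simp

theorem derivC_Eop (P : Poly n) : derivC u (Eop n P) = Eop n (derivC u P) + derivB u P := by
  rw [Eop_eq_linVectorField, Eop_eq_linVectorField, derivC, dirDeriv_linVectorField,
    add_right_inj, derivB, dirDeriv_apply, ← sum_comp_symplVar, ← (Equiv.sumComm _ _).sum_comp]
  simp only [Function.comp_apply, Sum.inl.injEq, symplVar_bijective.injective.eq_iff,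
    Finset.sum_ite_eq, Finset.mem_univ, if_true]
  refine Fintype.sum_congr _ _ ?_
  rintro (j | j) <;> simp

theorem derivCbar_Eop (P : Poly n) : derivCbar u (Eop n P) = Eop n (derivCbar u P) := by
  rw [Eop_eq_linVectorField, Eop_eq_linVectorField, derivCbar, dirDeriv_linVectorField]
  simp

theorem derivA_Edag (P : Poly n) : derivA u (Edag n P) = Edag n (derivA u P) := by
  rw [Edag_eq_linVectorField, Edag_eq_linVectorField, derivA, dirDeriv_linVectorField]
  simp

theorem derivB_Edag (P : Poly n) : derivB u (Edag n P) = Edag n (derivB u P) + derivC u P := by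
  rw [Edag_eq_linVectorField, Edag_eq_linVectorField, derivB, dirDeriv_linVectorField,
    add_right_inj, derivC, dirDeriv_apply]
  simp only [Function.comp_apply, Sum.inr.injEq, Finset.sum_ite_eq, Finset.mem_univ, if_true]
  refine Fintype.sum_congr _ _ ?_
  rintro (j | j) <;> simp

theorem derivC_Edag (P : Poly n) : derivC u (Edag n P) = Edag n (derivC u P) := by
  rw [Edag_eq_linVectorField, Edag_eq_linVectorField, derivC, dirDeriv_linVectorField]
  simp

theorem derivCbar_Edag (P : Poly n) :
    derivCbar u (Edag n P) = Edag n (derivCbar u P) - derivA u P := by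
  rw [Edag_eq_linVectorField, Edag_eq_linVectorField, derivCbar, dirDeriv_linVectorField,
    sub_eq_add_neg, add_right_inj, derivA, dirDeriv_apply, ← Finset.sum_neg_distrib,
    ← sum_comp_symplVar]
  simp only [Function.comp_apply, Sum.inr.injEq, symplVar_bijective.injective.eq_iff,
    Finset.sum_ite_eq, Finset.mem_univ, if_true]
  refine Fintype.sum_congr _ _ ?_
  rintro (j | j) <;> simp

theorem Eop_add (P Q : Poly n) : Eop n (P + Q) = Eop n P + Eop n Q := by
  simp only [Eop_eq_linVectorField, map_add]

theorem Edag_add (P Q : Poly n) : Edag n (P + Q) = Edag n P + Edag n Q := by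
  simp only [Edag_eq_linVectorField, map_add]

theorem derivW_apply (P : Poly n) :
    derivW u P = derivA u (derivB u P) + derivC u (derivCbar u P) := rfl

theorem derivW_Eop (P : Poly n) : derivW u (Eop n P) = Eop n (derivW u P) := by
  rw [derivW_apply, derivW_apply, derivB_Eop, derivCbar_Eop, derivA_Eop, derivC_Eop,
    Eop_add, derivCbar, derivB, dirDeriv_comm]
  abel

theorem derivW_Edag (P : Poly n) : derivW u (Edag n P) = Edag n (derivW u P) := by
  rw [derivW_apply, derivW_apply, derivB_Edag, derivCbar_Edag, map_add, map_sub, derivA_Edag,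
    derivC_Edag, Edag_add, derivA, derivC, dirDeriv_comm _ Sum.inl]
  abel

theorem derivW_derivB (P : Poly n) : derivW u (derivB u P) = derivB u (derivW u P) := by
  rw [derivW_apply, derivW_apply, map_add, derivA, derivB, derivC, derivCbar,
    dirDeriv_comm u, dirDeriv_comm (symplCoeff u), dirDeriv_comm fun x => conj (symplCoeff u x)]

def zDeg (n : ℕ) : Fin (2 * n) ⊕ Fin (2 * n) → ℕ := Sum.elim 1 0

def zbarDeg (n : ℕ) : Fin (2 * n) ⊕ Fin (2 * n) → ℕ := Sum.elim 0 1

def evalPt : Fin (2 * n) ⊕ Fin (2 * n) → ℂ := Sum.elim u fun j => conj (u j)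

theorem weight_zDeg (α : Fin (2 * n) ⊕ Fin (2 * n) →₀ ℕ) :
    Finsupp.weight (zDeg n) α = ∑ j, α (Sum.inl j) := by
  simp [Finsupp.weight_eq_sum, Fintype.sum_sum_type, zDeg]

theorem weight_zbarDeg (α : Fin (2 * n) ⊕ Fin (2 * n) →₀ ℕ) :
    Finsupp.weight (zbarDeg n) α = ∑ j, α (Sum.inr j) := by
  simp [Finsupp.weight_eq_sum, Fintype.sum_sum_type, zbarDeg]

theorem _root_.BiHom.isWeightedHomogeneous_zDeg {P : Poly n} {a b : ℕ} (h : BiHom n P a b) :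
    P.IsWeightedHomogeneous (zDeg n) a :=
  fun α hα => (weight_zDeg α).trans (h α (mem_support_iff.mpr hα)).1

theorem _root_.BiHom.isWeightedHomogeneous_zbarDeg {P : Poly n} {a b : ℕ}
    (h : BiHom n P a b) : P.IsWeightedHomogeneous (zbarDeg n) b :=
  fun α hα => (weight_zbarDeg α).trans (h α (mem_support_iff.mpr hα)).2

theorem eval_eq_constantCoeff {P : Poly n} (hz : P.IsWeightedHomogeneous (zDeg n) 0)
    (hzbar : P.IsWeightedHomogeneous (zbarDeg n) 0) (x : Fin (2 * n) ⊕ Fin (2 * n) → ℂ) :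
    eval x P = constantCoeff P := by
  have hP : P.IsHomogeneous 0 := fun α hα => by
    have h := congrArg₂ (· + ·) (hz hα) (hzbar hα)
    rw [weight_zDeg, weight_zbarDeg] at h
    simpa [Finsupp.weight_eq_sum, Fintype.sum_sum_type] using h
  rw [totalDegree_eq_zero_iff_eq_C.mp ((totalDegree_zero_iff_isHomogeneous _).mpr hP)]
  simp

section Homogeneity

variable {m : ℕ} {P : Poly n}

theorem isWeightedHomogeneous_zDeg_derivB (h : P.IsWeightedHomogeneous (zDeg n) m) :
    (derivB u P).IsWeightedHomogeneous (zDeg n) m :=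
  h.dirDeriv _ fun _ => rfl

theorem isWeightedHomogeneous_zbarDeg_derivB (h : P.IsWeightedHomogeneous (zbarDeg n) (m + 1)) :
    (derivB u P).IsWeightedHomogeneous (zbarDeg n) m :=
  h.dirDeriv _ fun _ => rfl

theorem isWeightedHomogeneous_zDeg_derivW (h : P.IsWeightedHomogeneous (zDeg n) (m + 1)) :
    (derivW u P).IsWeightedHomogeneous (zDeg n) m := by
  have hB : (derivB u P).IsWeightedHomogeneous (zDeg n) (m + 1) := h.dirDeriv _ fun _ => rfl
  have hCbar : (derivCbar u P).IsWeightedHomogeneous (zDeg n) (m + 1) := h.dirDeriv _ fun _ => rfl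
  exact (hB.dirDeriv _ fun _ => rfl).add (hCbar.dirDeriv _ fun _ => rfl)

theorem isWeightedHomogeneous_zbarDeg_derivW (h : P.IsWeightedHomogeneous (zbarDeg n) (m + 1)) :
    (derivW u P).IsWeightedHomogeneous (zbarDeg n) m := by
  have hB : (derivB u P).IsWeightedHomogeneous (zbarDeg n) m := h.dirDeriv _ fun _ => rfl
  have hCbar : (derivCbar u P).IsWeightedHomogeneous (zbarDeg n) m := h.dirDeriv _ fun _ => rfl
  exact (hB.dirDeriv _ fun _ => rfl).add (hCbar.dirDeriv _ fun _ => rfl)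

end Homogeneity

section Euler

variable {a b : ℕ} {P : Poly n}

theorem eval_derivA (h : P.IsWeightedHomogeneous (zDeg n) a) :
    eval (evalPt u) (derivA u P) = a * eval (evalPt u) P := by
  rw [← h.eval_sum_weight_mul_pderiv, derivA, dirDeriv_apply, map_sum]
  simp [Fintype.sum_sum_type, zDeg, evalPt]

theorem eval_derivB (h : P.IsWeightedHomogeneous (zbarDeg n) b) :
    eval (evalPt u) (derivB u P) = b * eval (evalPt u) P := by
  rw [← h.eval_sum_weight_mul_pderiv, derivB, dirDeriv_apply, map_sum]
  simp [Fintype.sum_sum_type, zbarDeg, evalPt]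

theorem eval_derivC (P : Poly n) : eval (evalPt u) (derivC u P) = eval (evalPt u) (Edag n P) := by
  rw [Edag_eq_linVectorField, derivC, dirDeriv_apply, linVectorField_apply, map_sum, map_sum]
  refine Fintype.sum_congr _ _ ?_
  rintro (j | j) <;> simp [evalPt]

theorem eval_derivW (hz : P.IsWeightedHomogeneous (zDeg n) a)
    (hzbar : P.IsWeightedHomogeneous (zbarDeg n) b) (hE : Edag n P = 0) :
    eval (evalPt u) (derivW u P) = a * (b + 1) * eval (evalPt u) P := by
  have hEdag : Edag n (derivCbar u P) = derivA u P :=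
    sub_eq_zero.mp (by rw [← derivCbar_Edag, hE, map_zero])
  rw [derivW_apply, map_add, eval_derivA u (isWeightedHomogeneous_zDeg_derivB u hz),
    eval_derivB u hzbar, eval_derivC, hEdag, eval_derivA u hz]
  ring

theorem eval_iterate_derivB {m : ℕ} (h : P.IsWeightedHomogeneous (zbarDeg n) (m + b)) :
    eval (evalPt u) ((derivB u)^[m] P) = (m + b).descFactorial m * eval (evalPt u) P := by
  induction m generalizing P with
  | zero => simp
  | succ m ih =>
    rw [Nat.add_right_comm] at h
    rw [Function.iterate_succ_apply, ih (isWeightedHomogeneous_zbarDeg_derivB u h),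
      eval_derivB u h, Nat.add_right_comm m 1 b, Nat.succ_descFactorial_succ]
    push_cast
    ring

theorem eval_iterate_derivW {m : ℕ} (hz : P.IsWeightedHomogeneous (zDeg n) (m + a))
    (hzbar : P.IsWeightedHomogeneous (zbarDeg n) (m + b)) (hE : Edag n P = 0) :
    eval (evalPt u) ((derivW u)^[m] P)
      = (m + a).descFactorial m * (m + b + 1).descFactorial m * eval (evalPt u) P := by
  induction m generalizing P with
  | zero => simp
  | succ m ih =>
    rw [Nat.add_right_comm] at hz hzbar
    have hE' : Edag n (derivW u P) = 0 := by rw [← derivW_Edag, hE, map_zero]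
    rw [Function.iterate_succ_apply, ih (isWeightedHomogeneous_zDeg_derivW u hz)
      (isWeightedHomogeneous_zbarDeg_derivW u hzbar) hE', eval_derivW u hz hzbar hE,
      Nat.add_right_comm m 1 a, Nat.add_right_comm m 1 b, Nat.succ_descFactorial_succ,
      Nat.succ_descFactorial_succ]
    push_cast
    ring

end Euler

section Adjoints

variable (P Q : Poly n)

theorem fischer_Apoly_mul : fischer (Apoly n u * P) Q = fischer P (derivA u Q) := by
  rw [show Apoly n u = linForm (fun j => conj (u j)) Sum.inl from rfl, fischer_linForm_mul]
  simp only [Complex.conj_conj]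
  rfl

theorem fischer_Bpoly_mul : fischer (Bpoly n u * P) Q = fischer P (derivB u Q) :=
  fischer_linForm_mul u Sum.inr P Q

theorem fischer_Cpoly_mul : fischer (Cpoly n u * P) Q = fischer P (derivC u Q) := by
  have : Cpoly n u = linForm (symplCoeff u) (Sum.inl ∘ symplVar n) := by
    simp [Cpoly, linForm, Fintype.sum_sum_type, sub_eq_add_neg, Finset.sum_add_distrib]
  rw [this, fischer_linForm_mul]
  rfl

theorem fischer_Cbarpoly_mul : fischer (Cbarpoly n u * P) Q = fischer P (derivCbar u Q) := by
  have : Cbarpoly n u = linForm (fun x => conj (symplCoeff u x)) (Sum.inr ∘ symplVar n) := by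
    simp [Cbarpoly, linForm, Fintype.sum_sum_type, sub_eq_add_neg, Finset.sum_add_distrib]
  rw [this, fischer_linForm_mul]
  simp only [Complex.conj_conj]
  rfl

theorem fischer_Wpoly_mul : fischer (Wpoly n u * P) Q = fischer P (derivW u Q) := by
  rw [Wpoly, add_mul, fischer_add_left, mul_comm (Apoly n u), mul_comm (Cpoly n u), mul_assoc,
    mul_assoc, fischer_Bpoly_mul, fischer_Apoly_mul, fischer_Cbarpoly_mul, fischer_Cpoly_mul,
    derivW_apply, fischer_add_right]

end Adjoints

theorem fischer_Zsymp (p q : ℕ) (S : Poly n) :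
    fischer (Zsymp n p q u) S = ((q - p + 1 : ℕ) : ℂ) / ((p.factorial : ℂ) * (q + 1).factorial)
      * constantCoeff ((derivW u)^[p] ((derivB u)^[q - p] S)) := by
  have hZ : Zsymp n p q u = (((q - p + 1 : ℕ) : ℂ) / ((p.factorial : ℂ) * (q + 1).factorial))
      • (Bpoly n u ^ (q - p) * (Wpoly n u ^ p * 1)) := by
    rw [Zsymp, smul_eq_C_mul, mul_one, mul_assoc, Wpoly]
  rw [hZ, fischer_smul_left, fischer_pow_mul_of_adjoint (fischer_Bpoly_mul u),
    fischer_pow_mul_of_adjoint (fischer_Wpoly_mul u), fischer_one_left]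
  simp

theorem constantCoeff_Eop (P : Poly n) : constantCoeff (Eop n P) = 0 := by
  simp [Eop]

theorem fischer_Zsymp_Eop (p q : ℕ) (S : Poly n) : fischer (Zsymp n p q u) (Eop n S) = 0 := by
  rw [fischer_Zsymp, (Function.Commute.iterate_left (derivB_Eop u) _).eq,
    (Function.Commute.iterate_left (derivW_Eop u) _).eq, constantCoeff_Eop, mul_zero]

theorem Zsymp_normalization {p q : ℕ} (hpq : p ≤ q) :
    ((q - p + 1 : ℕ) : ℂ) / ((p.factorial : ℂ) * (q + 1).factorial)
      * ((q - p).factorial * (p.factorial * (q + 1).descFactorial p)) = 1 := by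
  have h : (q - p + 1) * (q - p).factorial * (q + 1).descFactorial p = (q + 1).factorial := by
    rw [← Nat.factorial_succ, show q - p + 1 = q + 1 - p by omega,
      Nat.factorial_mul_descFactorial (by omega)]
  rw [div_mul_eq_mul_div, div_eq_one_iff_eq (by simp [Nat.factorial_ne_zero])]
  exact_mod_cast (by rw [← h]; ring)

theorem fischer_Zsymp_of_biHom {p q : ℕ} (hpq : p ≤ q) {R : Poly n} (hR : BiHom n R p q)
    (hE : Edag n R = 0) : fischer (Zsymp n p q u) R = eval (evalPt u) R := by
  rw [fischer_Zsymp, (Function.Commute.iterate_iterate (derivW_derivB u) p (q - p)).eq]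
  have hz := hR.isWeightedHomogeneous_zDeg
  have hzbar : R.IsWeightedHomogeneous (zbarDeg n) (p + (q - p)) := by
    rw [Nat.add_sub_cancel' hpq]
    exact hR.isWeightedHomogeneous_zbarDeg
  have hWzbar : ((derivW u)^[p] R).IsWeightedHomogeneous (zbarDeg n) (q - p) :=
    hzbar.iterate (isWeightedHomogeneous_zbarDeg_derivW u) p (by simp [add_comm])
  have hWz : ((derivW u)^[p] R).IsWeightedHomogeneous (zDeg n) 0 :=
    hz.iterate (isWeightedHomogeneous_zDeg_derivW u) p (by simp)
  have hBz : ((derivB u)^[q - p] ((derivW u)^[p] R)).IsWeightedHomogeneous (zDeg n) 0 :=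
    hWz.iterate (e := 0) (isWeightedHomogeneous_zDeg_derivB u) _ (by simp)
  have hBzbar : ((derivB u)^[q - p] ((derivW u)^[p] R)).IsWeightedHomogeneous (zbarDeg n) 0 :=
    hWzbar.iterate (isWeightedHomogeneous_zbarDeg_derivB u) _ (by simp)
  rw [← eval_eq_constantCoeff hBz hBzbar (evalPt u),
    eval_iterate_derivB u (m := q - p) (b := 0) hWzbar,
    eval_iterate_derivW u (a := 0) hz hzbar hE]
  simp only [add_zero, Nat.add_sub_cancel' hpq, Nat.descFactorial_self]
  linear_combination eval (evalPt u) R * Zsymp_normalization hpq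

end Symplectic

end SymplecticKernel

open SymplecticKernel in
theorem statement9_general (n p q : ℕ) (hpq : p ≤ q) (u : Fin (2 * n) → ℂ)
    (k : ℕ)
    (R : MvPolynomial (Fin (2 * n) ⊕ Fin (2 * n)) ℂ)
    (hR : BiHom n R (p - k) (q + k)) (hRsymp : Edag n R = 0) :
    fischer (Zsymp n p q u) ((Eop n)^[k] R)
      = (if k = 0 then 1 else 0) *
          eval (Sum.elim u (fun j => (starRingEnd ℂ) (u j))) R := by
  cases k with
  | zero =>
    rw [Function.iterate_zero_apply, if_pos rfl, one_mul]
    exact fischer_Zsymp_of_biHom u hpq hR hRsymp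
  | succ k => rw [Function.iterate_succ_apply', fischer_Zsymp_Eop, if_neg k.succ_ne_zero, zero_mul]

theorem statement9 (n p q : ℕ) (hn : 1 ≤ n) (hpq : p ≤ q) (u : Fin (2 * n) → ℂ)
    (k : ℕ) (hk : k ≤ p)
    (R : MvPolynomial (Fin (2 * n) ⊕ Fin (2 * n)) ℂ)
    (hR : BiHom n R (p - k) (q + k)) (hRsymp : Edag n R = 0) :
    fischer (Zsymp n p q u) ((Eop n)^[k] R)
      = (if k = 0 then 1 else 0) *
          eval (Sum.elim u (fun j => (starRingEnd ℂ) (u j))) R :=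
  statement9_general n p q hpq u k R hR hRsymp
end
end

section
/- Let n ≥ 1, 1 ≤ p ≤ q and u ∈ ℂ^{2n}. Then Δ_z Z^S_{p,q}(z,u) = ‖u‖²·Z^S_{p−1,q−1}(z,u), where Δ_z = ∑_{j=1}^{2n} ∂_{z̄_j}∂_{z_j} and ‖u‖² = ∑_{j=1}^{2n} |u_j|². -/
open MvPolynomial

noncomputable section

/-- The complex Laplacian `Δ_z = ∑_{j=1}^{2n} ∂_{z̄_j} ∂_{z_j}`. -/
def clap (n : ℕ) (P : MvPolynomial (Fin (2 * n) ⊕ Fin (2 * n)) ℂ) :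
    MvPolynomial (Fin (2 * n) ⊕ Fin (2 * n)) ℂ :=
  ∑ j : Fin (2 * n), pderiv (Sum.inr j) (pderiv (Sum.inl j) P)

/-- `‖u‖² = ∑_{j=1}^{2n} |u_j|²` as a complex scalar. -/
def u2 (n : ℕ) (u : Fin (2 * n) → ℂ) : ℂ := ∑ j : Fin (2 * n), u j * (starRingEnd ℂ) (u j)



variable {n : ℕ} {u : Fin (2 * n) → ℂ}

-- the constant giving the z-derivative of Cpoly
def dC (n : ℕ) (u : Fin (2 * n) → ℂ) (j : Fin (2 * n)) : ℂ :=
  if h : (j : ℕ) < n then u ⟨n + j, by omega⟩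
  else -u ⟨(j : ℕ) - n, by have := j.2; omega⟩

def dCb (n : ℕ) (u : Fin (2 * n) → ℂ) (j : Fin (2 * n)) : ℂ :=
  (starRingEnd ℂ) (dC n u j)

lemma dC_il (n : ℕ) (u : Fin (2 * n) → ℂ) (k : Fin n) :
    dC n u (il n k) = u (ir n k) := by
  have hk : ((il n k : Fin (2*n)) : ℕ) < n := k.2
  simp only [dC, dif_pos hk]
  rfl

lemma dC_ir (n : ℕ) (u : Fin (2 * n) → ℂ) (k : Fin n) :
    dC n u (ir n k) = -u (il n k) := by
  have hk : ¬ ((ir n k : Fin (2*n)) : ℕ) < n := Nat.not_lt.mpr (Nat.le_add_right _ _)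
  simp only [dC, dif_neg hk]
  congr 1
  apply congrArg u
  apply Fin.ext
  show n + k.1 - n = k.1
  omega

-- splitting a sum over Fin (2n)
lemma sum_fin_two {M : Type*} [AddCommMonoid M] (n : ℕ) (f : Fin (2 * n) → M) :
    ∑ i, f i = ∑ k : Fin n, f (il n k) + ∑ k : Fin n, f (ir n k) := by
  have hbij : Function.Bijective (Sum.elim (il n) (ir n)) := by
    constructor
    · rintro (a | a) (b | b) h <;>
        have h' := congrArg Fin.val h <;>
        simp only [Sum.elim_inl, Sum.elim_inr, il, ir] at h'
      · exact congrArg Sum.inl (Fin.ext h')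
      · exact absurd h' (by have := a.2; omega)
      · exact absurd h' (by have := b.2; omega)
      · exact congrArg Sum.inr (Fin.ext (by omega))
    · intro i
      by_cases h : (i : ℕ) < n
      · exact ⟨Sum.inl ⟨i, h⟩, Fin.ext rfl⟩
      · exact ⟨Sum.inr ⟨(i : ℕ) - n, by have := i.2; omega⟩, Fin.ext (by simp [ir]; omega)⟩
  rw [← Fintype.sum_bijective _ hbij (fun s => f (Sum.elim (il n) (ir n) s)) f (fun x => rfl)]
  rw [Fintype.sum_sum_type]
  rfl

variable {n : ℕ} {u : Fin (2 * n) → ℂ}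

lemma pdA_l (j : Fin (2 * n)) :
    pderiv (Sum.inl j) (Apoly n u) = C ((starRingEnd ℂ) (u j)) := by
  simp [Apoly, map_sum, pderiv_C_mul, pderiv_X, Pi.single_apply, Finset.sum_ite_eq']

lemma pdA_r (j : Fin (2 * n)) : pderiv (Sum.inr j) (Apoly n u) = 0 := by
  simp [Apoly, map_sum, pderiv_C_mul, pderiv_X, Pi.single_apply]

lemma pdB_r (j : Fin (2 * n)) : pderiv (Sum.inr j) (Bpoly n u) = C (u j) := by
  simp [Bpoly, map_sum, pderiv_C_mul, pderiv_X, Pi.single_apply, Finset.sum_ite_eq']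

lemma pdB_l (j : Fin (2 * n)) : pderiv (Sum.inl j) (Bpoly n u) = 0 := by
  simp [Bpoly, map_sum, pderiv_C_mul, pderiv_X, Pi.single_apply]

lemma pdC_r (i : Fin (2 * n)) : pderiv (Sum.inr i) (Cpoly n u) = 0 := by
  simp [Cpoly, map_sum, pderiv_C_mul, pderiv_X, Pi.single_apply]

lemma pdCb_l (i : Fin (2 * n)) : pderiv (Sum.inl i) (Cbarpoly n u) = 0 := by
  simp [Cbarpoly, map_sum, pderiv_C_mul, pderiv_X, Pi.single_apply]

lemma pdC_l (i : Fin (2 * n)) : pderiv (Sum.inl i) (Cpoly n u) = C (dC n u i) := by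
  rw [Cpoly, map_sum]
  by_cases hi : (i : ℕ) < n
  · rw [Finset.sum_eq_single ⟨(i : ℕ), hi⟩]
    · have e1 : il n ⟨(i : ℕ), hi⟩ = i := Fin.ext rfl
      have e2 : (Sum.inl (ir n ⟨(i : ℕ), hi⟩) : Fin (2 * n) ⊕ Fin (2 * n)) ≠ Sum.inl i := by
        intro h
        have h2 := congrArg Fin.val (Sum.inl_injective h)
        have : n + (i : ℕ) = (i : ℕ) := h2
        have := i.2; omega
      rw [map_sub, pderiv_C_mul, pderiv_C_mul, e1, pderiv_X_self, pderiv_X_of_ne e2,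
        dC, dif_pos hi]
      rw [mul_one, mul_zero, sub_zero]
      rfl
    · intro b _ hb
      have e1 : (Sum.inl (il n b) : Fin (2 * n) ⊕ Fin (2 * n)) ≠ Sum.inl i := by
        intro h
        apply hb
        have h2 := congrArg Fin.val (Sum.inl_injective h)
        exact Fin.ext h2
      have e2 : (Sum.inl (ir n b) : Fin (2 * n) ⊕ Fin (2 * n)) ≠ Sum.inl i := by
        intro h
        have h2 := congrArg Fin.val (Sum.inl_injective h)
        have : n + (b : ℕ) = (i : ℕ) := h2
        omega
      rw [map_sub, pderiv_C_mul, pderiv_C_mul, pderiv_X_of_ne e1, pderiv_X_of_ne e2]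
      ring
    · simp
  · rw [Finset.sum_eq_single ⟨(i : ℕ) - n, by have := i.2; omega⟩]
    · have e2 : ir n ⟨(i : ℕ) - n, by have := i.2; omega⟩ = i := by
        apply Fin.ext
        show n + ((i : ℕ) - n) = (i : ℕ)
        omega
      have e1 : (Sum.inl (il n ⟨(i : ℕ) - n, by have := i.2; omega⟩) :
          Fin (2 * n) ⊕ Fin (2 * n)) ≠ Sum.inl i := by
        intro h
        have h2 := congrArg Fin.val (Sum.inl_injective h)
        have : (i : ℕ) - n = (i : ℕ) := h2
        have := i.2; omega
      rw [map_sub, pderiv_C_mul, pderiv_C_mul, e2, pderiv_X_self, pderiv_X_of_ne e1,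
        dC, dif_neg hi]
      rw [mul_one, mul_zero, zero_sub, map_neg]
      rfl
    · intro b _ hb
      have e1 : (Sum.inl (il n b) : Fin (2 * n) ⊕ Fin (2 * n)) ≠ Sum.inl i := by
        intro h
        have h2 := congrArg Fin.val (Sum.inl_injective h)
        have : (b : ℕ) = (i : ℕ) := h2
        have := b.2; omega
      have e2 : (Sum.inl (ir n b) : Fin (2 * n) ⊕ Fin (2 * n)) ≠ Sum.inl i := by
        intro h
        apply hb
        have h2 := congrArg Fin.val (Sum.inl_injective h)
        have : n + (b : ℕ) = (i : ℕ) := h2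
        apply Fin.ext
        show (b : ℕ) = (i : ℕ) - n
        omega
      rw [map_sub, pderiv_C_mul, pderiv_C_mul, pderiv_X_of_ne e1, pderiv_X_of_ne e2]
      ring
    · simp

lemma pdCb_r (i : Fin (2 * n)) : pderiv (Sum.inr i) (Cbarpoly n u) = C (dCb n u i) := by
  rw [Cbarpoly, map_sum]
  by_cases hi : (i : ℕ) < n
  · rw [Finset.sum_eq_single ⟨(i : ℕ), hi⟩]
    · have e1 : il n ⟨(i : ℕ), hi⟩ = i := Fin.ext rfl
      have e2 : (Sum.inr (ir n ⟨(i : ℕ), hi⟩) : Fin (2 * n) ⊕ Fin (2 * n)) ≠ Sum.inr i := by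
        intro h
        have h2 := congrArg Fin.val (Sum.inr_injective h)
        have : n + (i : ℕ) = (i : ℕ) := h2
        have := i.2; omega
      rw [map_sub, pderiv_C_mul, pderiv_C_mul, e1, pderiv_X_self, pderiv_X_of_ne e2,
        dCb, dC, dif_pos hi]
      rw [mul_one, mul_zero, sub_zero]
      rfl
    · intro b _ hb
      have e1 : (Sum.inr (il n b) : Fin (2 * n) ⊕ Fin (2 * n)) ≠ Sum.inr i := by
        intro h
        apply hb
        have h2 := congrArg Fin.val (Sum.inr_injective h)
        exact Fin.ext h2
      have e2 : (Sum.inr (ir n b) : Fin (2 * n) ⊕ Fin (2 * n)) ≠ Sum.inr i := by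
        intro h
        have h2 := congrArg Fin.val (Sum.inr_injective h)
        have : n + (b : ℕ) = (i : ℕ) := h2
        omega
      rw [map_sub, pderiv_C_mul, pderiv_C_mul, pderiv_X_of_ne e1, pderiv_X_of_ne e2]
      ring
    · simp
  · rw [Finset.sum_eq_single ⟨(i : ℕ) - n, by have := i.2; omega⟩]
    · have e2 : ir n ⟨(i : ℕ) - n, by have := i.2; omega⟩ = i := by
        apply Fin.ext
        show n + ((i : ℕ) - n) = (i : ℕ)
        omega
      have e1 : (Sum.inr (il n ⟨(i : ℕ) - n, by have := i.2; omega⟩) :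
          Fin (2 * n) ⊕ Fin (2 * n)) ≠ Sum.inr i := by
        intro h
        have h2 := congrArg Fin.val (Sum.inr_injective h)
        have : (i : ℕ) - n = (i : ℕ) := h2
        have := i.2; omega
      rw [map_sub, pderiv_C_mul, pderiv_C_mul, e2, pderiv_X_self, pderiv_X_of_ne e1,
        dCb, dC, dif_neg hi]
      rw [mul_one, mul_zero, zero_sub, map_neg, map_neg]
      rfl
    · intro b _ hb
      have e1 : (Sum.inr (il n b) : Fin (2 * n) ⊕ Fin (2 * n)) ≠ Sum.inr i := by
        intro h
        have h2 := congrArg Fin.val (Sum.inr_injective h)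
        have : (b : ℕ) = (i : ℕ) := h2
        have := b.2; omega
      have e2 : (Sum.inr (ir n b) : Fin (2 * n) ⊕ Fin (2 * n)) ≠ Sum.inr i := by
        intro h
        apply hb
        have h2 := congrArg Fin.val (Sum.inr_injective h)
        have : n + (b : ℕ) = (i : ℕ) := h2
        apply Fin.ext
        show (b : ℕ) = (i : ℕ) - n
        omega
      rw [map_sub, pderiv_C_mul, pderiv_C_mul, pderiv_X_of_ne e1, pderiv_X_of_ne e2]
      ring
    · simp

lemma dCb_il (k : Fin n) : dCb n u (il n k) = (starRingEnd ℂ) (u (ir n k)) := by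
  rw [dCb, dC_il]

lemma dCb_ir (k : Fin n) : dCb n u (ir n k) = -(starRingEnd ℂ) (u (il n k)) := by
  rw [dCb, dC_ir, map_neg]

lemma sum_u_dC : ∑ j : Fin (2 * n), u j * dC n u j = 0 := by
  rw [sum_fin_two, ← Finset.sum_add_distrib]
  apply Finset.sum_eq_zero
  intro k _
  rw [dC_il, dC_ir]
  ring

lemma sum_cu_dCb : ∑ j : Fin (2 * n), (starRingEnd ℂ) (u j) * dCb n u j = 0 := by
  rw [sum_fin_two, ← Finset.sum_add_distrib]
  apply Finset.sum_eq_zero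
  intro k _
  rw [dCb_il, dCb_ir]
  ring

lemma sum_dC_dCb : ∑ j : Fin (2 * n), dC n u j * dCb n u j = u2 n u := by
  rw [sum_fin_two n (fun j => dC n u j * dCb n u j), u2,
    sum_fin_two n (fun j => u j * (starRingEnd ℂ) (u j))]
  conv_rhs => rw [add_comm]
  congr 1
  · exact Finset.sum_congr rfl (fun k _ => by rw [dC_il, dCb_il])
  · exact Finset.sum_congr rfl (fun k _ => by rw [dC_ir, dCb_ir]; ring)

lemma sum_cu_u : ∑ j : Fin (2 * n), (starRingEnd ℂ) (u j) * u j = u2 n u := by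
  rw [u2]
  exact Finset.sum_congr rfl (fun k _ => mul_comm _ _)

lemma pdZ_l (M a : ℕ) (c : ℂ) (j : Fin (2 * n)) :
    pderiv (Sum.inl j)
      (C c * Bpoly n u ^ M *
        (Apoly n u * Bpoly n u + Cpoly n u * Cbarpoly n u) ^ (a + 1)) =
    C (c * (a + 1)) * Bpoly n u ^ M *
      ((Apoly n u * Bpoly n u + Cpoly n u * Cbarpoly n u) ^ a *
        (C ((starRingEnd ℂ) (u j)) * Bpoly n u + C (dC n u j) * Cbarpoly n u)) := by
  simp only [pderiv_mul, pderiv_C, Derivation.leibniz_pow, smul_eq_mul, nsmul_eq_mul,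
    Nat.add_sub_cancel, map_add, pdA_l, pdB_l, pdC_l, pdCb_l, map_mul, map_natCast,
    mul_zero, zero_mul, add_zero, zero_add, map_one]
  push_cast
  ring

lemma pdW_r (M a : ℕ) (c' : ℂ) (j : Fin (2 * n)) :
    pderiv (Sum.inr j)
      (C c' * Bpoly n u ^ M * ((Apoly n u * Bpoly n u + Cpoly n u * Cbarpoly n u) ^ a * (C ((starRingEnd ℂ) (u j)) * Bpoly n u + C (dC n u j) * Cbarpoly n u))) =
    C (c' * M) * (Bpoly n u ^ (M - 1) * C (u j) * ((Apoly n u * Bpoly n u + Cpoly n u * Cbarpoly n u) ^ a * (C ((starRingEnd ℂ) (u j)) * Bpoly n u + C (dC n u j) * Cbarpoly n u)))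
      + C (c' * a) * (Bpoly n u ^ M * ((Apoly n u * Bpoly n u + Cpoly n u * Cbarpoly n u) ^ (a - 1) * (Apoly n u * C (u j) + Cpoly n u * C (dCb n u j)) * (C ((starRingEnd ℂ) (u j)) * Bpoly n u + C (dC n u j) * Cbarpoly n u)))
      + C c' * (Bpoly n u ^ M * ((Apoly n u * Bpoly n u + Cpoly n u * Cbarpoly n u) ^ a * C ((starRingEnd ℂ) (u j) * u j + dC n u j * dCb n u j))) := by
  simp only [pderiv_mul, pderiv_C, pderiv_C_mul, Derivation.leibniz_pow, smul_eq_mul,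
    nsmul_eq_mul, map_add, pdA_r, pdB_r, pdC_r, pdCb_r, map_mul, map_natCast,
    mul_zero, zero_mul, add_zero, zero_add, map_one]
  push_cast
  ring


lemma key_pow (k : ℕ) (x : MvPolynomial (Fin (2 * n) ⊕ Fin (2 * n)) ℂ) :
    (k : MvPolynomial (Fin (2 * n) ⊕ Fin (2 * n)) ℂ) * x ^ (k - 1) * x
      = (k : MvPolynomial (Fin (2 * n) ⊕ Fin (2 * n)) ℂ) * x ^ k := by
  cases k with
  | zero => simp
  | succ m => rw [pow_succ]; push_cast; ring

lemma sC1 : ∑ j : Fin (2 * n),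
    (C (u j * (starRingEnd ℂ) (u j)) : MvPolynomial (Fin (2 * n) ⊕ Fin (2 * n)) ℂ)
      = C (u2 n u) := by
  rw [← map_sum]; rfl

lemma sC2 : ∑ j : Fin (2 * n),
    (C (u j * dC n u j) : MvPolynomial (Fin (2 * n) ⊕ Fin (2 * n)) ℂ) = 0 := by
  rw [← map_sum, sum_u_dC, map_zero]

lemma sC3 : ∑ j : Fin (2 * n),
    (C ((starRingEnd ℂ) (u j) * dCb n u j) : MvPolynomial (Fin (2 * n) ⊕ Fin (2 * n)) ℂ)
      = 0 := by
  rw [← map_sum, sum_cu_dCb, map_zero]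

lemma sC4 : ∑ j : Fin (2 * n),
    (C (dC n u j * dCb n u j) : MvPolynomial (Fin (2 * n) ⊕ Fin (2 * n)) ℂ)
      = C (u2 n u) := by
  rw [← map_sum, sum_dC_dCb]

lemma sC5 : ∑ j : Fin (2 * n),
    (C ((starRingEnd ℂ) (u j) * u j) : MvPolynomial (Fin (2 * n) ⊕ Fin (2 * n)) ℂ)
      = C (u2 n u) := by
  rw [← map_sum, sum_cu_u]

set_option maxHeartbeats 3200000 in
theorem statement10 (n p q : ℕ) (hn : 1 ≤ n) (hp : 1 ≤ p) (hpq : p ≤ q)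
    (u : Fin (2 * n) → ℂ) :
    clap n (Zsymp n p q u) = C (u2 n u) * Zsymp n (p - 1) (q - 1) u := by
  obtain ⟨a, rfl⟩ : ∃ a, p = a + 1 := ⟨p - 1, by omega⟩
  obtain ⟨b, rfl⟩ : ∃ b, q = b + 1 := ⟨q - 1, by omega⟩
  have hab : a ≤ b := by omega
  have hm : b + 1 - (a + 1) = b - a := by omega
  simp only [Zsymp, clap, hm, Nat.add_sub_cancel]
  have h1 : ∀ j : Fin (2 * n),
      pderiv (Sum.inr j) (pderiv (Sum.inl j)
        (C (((b - a + 1 : ℕ) : ℂ) / (((a + 1).factorial : ℂ) * (((b + 1) + 1).factorial : ℂ))) * Bpoly n u ^ (b - a) * (Apoly n u * Bpoly n u + Cpoly n u * Cbarpoly n u) ^ (a + 1))) =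
      (C ((((b - a + 1 : ℕ) : ℂ) / (((a + 1).factorial : ℂ) * (((b + 1) + 1).factorial : ℂ))) * ((a:ℂ) + 1) * ((b - a : ℕ) : ℂ)) * (Bpoly n u ^ (b - a - 1) * ((Apoly n u * Bpoly n u + Cpoly n u * Cbarpoly n u) ^ a * Bpoly n u)) + C ((((b - a + 1 : ℕ) : ℂ) / (((a + 1).factorial : ℂ) * (((b + 1) + 1).factorial : ℂ))) * ((a:ℂ) + 1) * (a:ℂ)) * (Bpoly n u ^ (b - a) * ((Apoly n u * Bpoly n u + Cpoly n u * Cbarpoly n u) ^ (a - 1) * (Apoly n u * Bpoly n u)))) * C (u j * (starRingEnd ℂ) (u j))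
        + (C ((((b - a + 1 : ℕ) : ℂ) / (((a + 1).factorial : ℂ) * (((b + 1) + 1).factorial : ℂ))) * ((a:ℂ) + 1) * ((b - a : ℕ) : ℂ)) * (Bpoly n u ^ (b - a - 1) * ((Apoly n u * Bpoly n u + Cpoly n u * Cbarpoly n u) ^ a * Cbarpoly n u)) + C ((((b - a + 1 : ℕ) : ℂ) / (((a + 1).factorial : ℂ) * (((b + 1) + 1).factorial : ℂ))) * ((a:ℂ) + 1) * (a:ℂ)) * (Bpoly n u ^ (b - a) * ((Apoly n u * Bpoly n u + Cpoly n u * Cbarpoly n u) ^ (a - 1) * (Apoly n u * Cbarpoly n u)))) * C (u j * dC n u j)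
        + (C ((((b - a + 1 : ℕ) : ℂ) / (((a + 1).factorial : ℂ) * (((b + 1) + 1).factorial : ℂ))) * ((a:ℂ) + 1) * (a:ℂ)) * (Bpoly n u ^ (b - a) * ((Apoly n u * Bpoly n u + Cpoly n u * Cbarpoly n u) ^ (a - 1) * (Cpoly n u * Bpoly n u)))) * C ((starRingEnd ℂ) (u j) * dCb n u j)
        + (C ((((b - a + 1 : ℕ) : ℂ) / (((a + 1).factorial : ℂ) * (((b + 1) + 1).factorial : ℂ))) * ((a:ℂ) + 1) * (a:ℂ)) * (Bpoly n u ^ (b - a) * ((Apoly n u * Bpoly n u + Cpoly n u * Cbarpoly n u) ^ (a - 1) * (Cpoly n u * Cbarpoly n u)))) * C (dC n u j * dCb n u j)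
        + (C ((((b - a + 1 : ℕ) : ℂ) / (((a + 1).factorial : ℂ) * (((b + 1) + 1).factorial : ℂ))) * ((a:ℂ) + 1)) * (Bpoly n u ^ (b - a) * (Apoly n u * Bpoly n u + Cpoly n u * Cbarpoly n u) ^ a)) * C ((starRingEnd ℂ) (u j) * u j)
        + (C ((((b - a + 1 : ℕ) : ℂ) / (((a + 1).factorial : ℂ) * (((b + 1) + 1).factorial : ℂ))) * ((a:ℂ) + 1)) * (Bpoly n u ^ (b - a) * (Apoly n u * Bpoly n u + Cpoly n u * Cbarpoly n u) ^ a)) * C (dC n u j * dCb n u j) := by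
    intro j
    rw [pdZ_l, pdW_r]
    simp only [map_mul, map_add, map_natCast, map_one]
    push_cast
    ring
  rw [Finset.sum_congr rfl (fun j _ => h1 j)]
  rw [Finset.sum_add_distrib, Finset.sum_add_distrib, Finset.sum_add_distrib,
    Finset.sum_add_distrib, Finset.sum_add_distrib,
    ← Finset.mul_sum, ← Finset.mul_sum, ← Finset.mul_sum, ← Finset.mul_sum,
    ← Finset.mul_sum, ← Finset.mul_sum, sC1, sC2, sC3, sC4, sC5]
  have hscal : (((b - a + 1 : ℕ) : ℂ) / (((a + 1).factorial : ℂ) * (((b + 1) + 1).factorial : ℂ))) * ((a:ℂ) + 1) * (((b - a : ℕ) : ℂ) + (a:ℂ) + 2) = (((b - a + 1 : ℕ) : ℂ) / ((a.factorial : ℂ) * ((b + 1).factorial : ℂ))) := by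
    have fact1 : (((a + 1).factorial : ℕ) : ℂ) = ((a:ℂ) + 1) * (a.factorial : ℂ) := by
      rw [Nat.factorial_succ]; push_cast; ring
    have fact2 : ((((b + 1) + 1).factorial : ℕ) : ℂ) = ((b:ℂ) + 2) * ((b + 1).factorial : ℂ) := by
      rw [Nat.factorial_succ]; push_cast; ring
    rw [fact1, fact2, Nat.cast_sub hab]
    have nz1 : (a.factorial : ℂ) ≠ 0 := Nat.cast_ne_zero.mpr (Nat.factorial_ne_zero a)
    have nz2 : ((b + 1).factorial : ℂ) ≠ 0 := Nat.cast_ne_zero.mpr (Nat.factorial_ne_zero _)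
    have nz3 : ((a:ℂ) + 1) ≠ 0 := by
      intro h; have := congrArg Complex.re h; simp at this
      have : (a:ℝ) = -1 := by linarith
      have h4 : (0:ℝ) ≤ (a:ℝ) := Nat.cast_nonneg a
      linarith
    have nz4 : ((b:ℂ) + 2) ≠ 0 := by
      intro h; have := congrArg Complex.re h; simp at this
      have : (b:ℝ) = -2 := by linarith
      have h4 : (0:ℝ) ≤ (b:ℝ) := Nat.cast_nonneg b
      linarith
    field_simp
    ring
  calc (C ((((b - a + 1 : ℕ) : ℂ) / (((a + 1).factorial : ℂ) * (((b + 1) + 1).factorial : ℂ))) * ((a:ℂ) + 1) * ((b - a : ℕ) : ℂ)) * (Bpoly n u ^ (b - a - 1) * ((Apoly n u * Bpoly n u + Cpoly n u * Cbarpoly n u) ^ a * Bpoly n u)) + C ((((b - a + 1 : ℕ) : ℂ) / (((a + 1).factorial : ℂ) * (((b + 1) + 1).factorial : ℂ))) * ((a:ℂ) + 1) * (a:ℂ)) * (Bpoly n u ^ (b - a) * ((Apoly n u * Bpoly n u + Cpoly n u * Cbarpoly n u) ^ (a - 1) * (Apoly n u * Bpoly n u)))) * C (u2 n u) + (C ((((b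 - a + 1 : ℕ) : ℂ) / (((a + 1).factorial : ℂ) * (((b + 1) + 1).factorial : ℂ))) * ((a:ℂ) + 1) * ((b - a : ℕ) : ℂ)) * (Bpoly n u ^ (b - a - 1) * ((Apoly n u * Bpoly n u + Cpoly n u * Cbarpoly n u) ^ a * Cbarpoly n u)) + C ((((b - a + 1 : ℕ) : ℂ) / (((a + 1).factorial : ℂ) * (((b + 1) + 1).factorial : ℂ))) * ((a:ℂ) + 1) * (a:ℂ)) * (Bpoly n u ^ (b - a) * ((Apoly n u * Bpoly n u + Cpoly n u * Cbarpoly n u) ^ (a - 1) * (Apoly n u * Cbarpoly n u)))) * 0 + (C ((((b - a + 1 : ℕ) : ℂ) / (((a + 1).factorial : ℂ) * (((b + 1) + 1).factorial : ℂ))) * ((a:ℂ) + 1) * (a:ℂ)) * (Bpoly n u ^ (b - a) * ((Apoly n u * Bpoly n u + Cpoly n u * Cbarpoly n u) ^ (a - 1) * (Cpoly n u * Bpoly n u)))) * 0 + (C ((((b - a + 1 : ℕ) : ℂ) / (((a + 1).factorial : ℂ) * (((b + 1) + 1).factorial : ℂ))) * ((a:ℂ) + 1) * (a:ℂ)) *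 (Bpoly n u ^ (b - a) * ((Apoly n u * Bpoly n u + Cpoly n u * Cbarpoly n u) ^ (a - 1) * (Cpoly n u * Cbarpoly n u)))) * C (u2 n u)
        + (C ((((b - a + 1 : ℕ) : ℂ) / (((a + 1).factorial : ℂ) * (((b + 1) + 1).factorial : ℂ))) * ((a:ℂ) + 1)) * (Bpoly n u ^ (b - a) * (Apoly n u * Bpoly n u + Cpoly n u * Cbarpoly n u) ^ a)) * C (u2 n u) + (C ((((b - a + 1 : ℕ) : ℂ) / (((a + 1).factorial : ℂ) * (((b + 1) + 1).factorial : ℂ))) * ((a:ℂ) + 1)) * (Bpoly n u ^ (b - a) * (Apoly n u * Bpoly n u + Cpoly n u * Cbarpoly n u) ^ a)) * C (u2 n u)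
      = C (((b - a + 1 : ℕ) : ℂ) / (((a + 1).factorial : ℂ) * (((b + 1) + 1).factorial : ℂ))) * C ((a:ℂ) + 1) * C (u2 n u) *
          (((((b - a : ℕ) : ℕ) : MvPolynomial (Fin (2 * n) ⊕ Fin (2 * n)) ℂ)
              * Bpoly n u ^ (b - a - 1) * Bpoly n u) * (Apoly n u * Bpoly n u + Cpoly n u * Cbarpoly n u) ^ a
            + (((a : ℕ) : MvPolynomial (Fin (2 * n) ⊕ Fin (2 * n)) ℂ)
              * (Apoly n u * Bpoly n u + Cpoly n u * Cbarpoly n u) ^ (a - 1) * (Apoly n u * Bpoly n u + Cpoly n u * Cbarpoly n u)) * Bpoly n u ^ (b - a)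
            + 2 * (Bpoly n u ^ (b - a) * (Apoly n u * Bpoly n u + Cpoly n u * Cbarpoly n u) ^ a)) := by
        simp only [map_mul, map_add, map_natCast, map_one]
        push_cast
        ring
    _ = C (((b - a + 1 : ℕ) : ℂ) / (((a + 1).factorial : ℂ) * (((b + 1) + 1).factorial : ℂ))) * C ((a:ℂ) + 1) * C (u2 n u) *
          ((((b - a : ℕ) : MvPolynomial (Fin (2 * n) ⊕ Fin (2 * n)) ℂ) * Bpoly n u ^ (b - a)) * (Apoly n u * Bpoly n u + Cpoly n u * Cbarpoly n u) ^ a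
            + (((a : ℕ) : MvPolynomial (Fin (2 * n) ⊕ Fin (2 * n)) ℂ) * (Apoly n u * Bpoly n u + Cpoly n u * Cbarpoly n u) ^ a) * Bpoly n u ^ (b - a)
            + 2 * (Bpoly n u ^ (b - a) * (Apoly n u * Bpoly n u + Cpoly n u * Cbarpoly n u) ^ a)) := by
        rw [key_pow (b - a) (Bpoly n u), key_pow a ((Apoly n u * Bpoly n u + Cpoly n u * Cbarpoly n u))]
    _ = C ((((b - a + 1 : ℕ) : ℂ) / (((a + 1).factorial : ℂ) * (((b + 1) + 1).factorial : ℂ))) * ((a:ℂ) + 1) * (((b - a : ℕ) : ℂ) + (a:ℂ) + 2)) * C (u2 n u) *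
          (Bpoly n u ^ (b - a) * (Apoly n u * Bpoly n u + Cpoly n u * Cbarpoly n u) ^ a) := by
        simp only [map_mul, map_add, map_natCast, map_one, map_ofNat]
        push_cast
        ring
    _ = C (u2 n u) * (C (((b - a + 1 : ℕ) : ℂ) / ((a.factorial : ℂ) * ((b + 1).factorial : ℂ))) * Bpoly n u ^ (b - a) * (Apoly n u * Bpoly n u + Cpoly n u * Cbarpoly n u) ^ a) := by
        rw [hscal]
        ring

end
end

section
/- Let n ≥ 2, 0 ≤ p ≤ q and u ∈ ℂ^{2n}. With β_j = ((−1)^j·(2n−1+p+q)/j!)·(2n−2+p+q−j)!/(2n−1+p+q)! for 0 ≤ j ≤ p, the harmonic projection of the symplectic kernel is: ∑_{j=0}^{p} β_j·‖z‖^{2j}·Δ_z^j Z^S_{p,q}(z,u) = c_{p,q}·⟨z̄,u⟩^{q−p}·∑_{j=0}^{p} C(p+2n−3, p−j)·C(q+1, j)·(T − ‖z‖²‖u‖²)^j·T^{p−j}, where T denotes the polynomial ⟨z,ū⟩⟨z̄,u⟩ + ⟨z,u⟩_s·⟨z̄,ū⟩_s and c_{p,q} = (q−p+1)·(q+2n−2)!/((p+q+2n−2)!·(q+1)!).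 (Equivalently, the right-hand side equals c_{p,q}·⟨z̄,u⟩^{q−p}·‖z‖^{2p}‖u‖^{2p}·P_p^{(2n−3,q−p+1)}(2t−1) with t = T/(‖z‖²‖u‖²) and P the Jacobi polynomial.) -/
/-!
Write `A = ⟨z,ū⟩`, `B = ⟨z̄,u⟩`, `C = ⟨z,u⟩_s`, `D = ⟨z̄,ū⟩_s` and `T = AB + CD`. The forms `A`, `C`
are holomorphic and `B`, `D` antiholomorphic, with coefficient vectors `ū, u, Ju, conj (Ju)`
satisfying `ū ⬝ u = Ju ⬝ conj (Ju) = ‖u‖²` and `ū ⬝ conj (Ju) = Ju ⬝ u = 0`. From these four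
identities alone, `Δ (B^m T^k) = k (m+k+1) ‖u‖² B^m T^(k-1)`, so `Δ^j Z^S_{p,q}` is an explicit
multiple of `‖u‖^(2j) B^(q-p) T^(p-j)`. Expanding `(T - ‖z‖²‖u‖²)^j` binomially and summing with
Chu–Vandermonde, both sides have the same coefficient of `‖z‖^(2l) ‖u‖^(2l) B^(q-p) T^(p-l)`.
-/

open MvPolynomial

noncomputable section

/-- The polynomial `‖z‖² = ∑_{j=1}^{2n} z_j z̄_j`. -/
def r2poly (n : ℕ) : MvPolynomial (Fin (2 * n) ⊕ Fin (2 * n)) ℂ :=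
  ∑ j : Fin (2 * n), X (Sum.inl j) * X (Sum.inr j)

/-- The coefficients `β_j = ((−1)^j (2n−1+p+q)/j!)·(2n−2+p+q−j)!/(2n−1+p+q)!`. -/
def betaCoeff (n p q j : ℕ) : ℂ :=
  ((-1 : ℂ) ^ j * ((2 * n - 1 + p + q : ℕ) : ℂ) / (j.factorial : ℂ)) *
    (((2 * n - 2 + p + q - j).factorial : ℕ) : ℂ) / (((2 * n - 1 + p + q).factorial : ℕ) : ℂ)

/-- The constant `c_{p,q} = (q−p+1)(q+2n−2)!/((p+q+2n−2)!(q+1)!)`. -/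
def cConst (n p q : ℕ) : ℂ :=
  ((q - p + 1 : ℕ) : ℂ) * ((q + 2 * n - 2).factorial : ℂ) /
    (((p + q + 2 * n - 2).factorial : ℂ) * ((q + 1).factorial : ℂ))

section Laplacian

variable {n : ℕ}

def gradPairing (n : ℕ) (f g : MvPolynomial (Fin (2 * n) ⊕ Fin (2 * n)) ℂ) :
    MvPolynomial (Fin (2 * n) ⊕ Fin (2 * n)) ℂ :=
  ∑ j : Fin (2 * n), pderiv (Sum.inl j) f * pderiv (Sum.inr j) g

lemma clap_mul (f g : MvPolynomial (Fin (2 * n) ⊕ Fin (2 * n)) ℂ) :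
    clap n (f * g) = clap n f * g + f * clap n g + gradPairing n f g + gradPairing n g f := by
  simp only [clap, gradPairing, pderiv_mul, map_add, Finset.sum_mul, Finset.mul_sum,
    ← Finset.sum_add_distrib]
  exact Finset.sum_congr rfl fun _ _ => by ring

lemma clap_C_mul (a : ℂ) (f : MvPolynomial (Fin (2 * n) ⊕ Fin (2 * n)) ℂ) :
    clap n (C a * f) = C a * clap n f := by
  simp only [clap, pderiv_C_mul, Finset.mul_sum]

lemma gradPairing_pow_left (f g : MvPolynomial (Fin (2 * n) ⊕ Fin (2 * n)) ℂ) (k : ℕ) :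
    gradPairing n (f ^ k) g = k * f ^ (k - 1) * gradPairing n f g := by
  simp only [gradPairing, pderiv_pow, Finset.mul_sum, mul_assoc]

lemma gradPairing_pow_right (f g : MvPolynomial (Fin (2 * n) ⊕ Fin (2 * n)) ℂ) (k : ℕ) :
    gradPairing n f (g ^ k) = k * g ^ (k - 1) * gradPairing n f g := by
  simp only [gradPairing, pderiv_pow, Finset.mul_sum]
  exact Finset.sum_congr rfl fun _ _ => by ring

lemma clap_eq_zero_of_pderiv_inl {f : MvPolynomial (Fin (2 * n) ⊕ Fin (2 * n)) ℂ}
    (hf : ∀ j, pderiv (Sum.inl j) f = 0) : clap n f = 0 := by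
  simp [clap, hf]

lemma gradPairing_eq_zero_of_pderiv_inl {f : MvPolynomial (Fin (2 * n) ⊕ Fin (2 * n)) ℂ}
    (hf : ∀ j, pderiv (Sum.inl j) f = 0) (g : MvPolynomial (Fin (2 * n) ⊕ Fin (2 * n)) ℂ) :
    gradPairing n f g = 0 := by
  simp [gradPairing, hf]

end Laplacian

section LinearForms

variable {n : ℕ}

def linForm (n : ℕ) (a : Fin (2 * n) → ℂ) : MvPolynomial (Fin (2 * n) ⊕ Fin (2 * n)) ℂ :=
  ∑ j, C (a j) * X (Sum.inl j)

def linFormBar (n : ℕ) (b : Fin (2 * n) → ℂ) : MvPolynomial (Fin (2 * n) ⊕ Fin (2 * n)) ℂ :=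
  ∑ j, C (b j) * X (Sum.inr j)

@[simp] lemma pderiv_inl_linForm (a : Fin (2 * n) → ℂ) (k : Fin (2 * n)) :
    pderiv (Sum.inl k) (linForm n a) = C (a k) := by
  classical simp [linForm, Pi.single_apply]

@[simp] lemma pderiv_inr_linForm (a : Fin (2 * n) → ℂ) (k : Fin (2 * n)) :
    pderiv (Sum.inr k) (linForm n a) = 0 := by
  classical simp [linForm]

@[simp] lemma pderiv_inl_linFormBar (b : Fin (2 * n) → ℂ) (k : Fin (2 * n)) :
    pderiv (Sum.inl k) (linFormBar n b) = 0 := by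
  classical simp [linFormBar]

@[simp] lemma pderiv_inr_linFormBar (b : Fin (2 * n) → ℂ) (k : Fin (2 * n)) :
    pderiv (Sum.inr k) (linFormBar n b) = C (b k) := by
  classical simp [linFormBar, Pi.single_apply]

end LinearForms

section QuadForm

variable {n : ℕ}

def quadForm (n : ℕ) (a b c d : Fin (2 * n) → ℂ) : MvPolynomial (Fin (2 * n) ⊕ Fin (2 * n)) ℂ :=
  linForm n a * linFormBar n b + linForm n c * linFormBar n d

variable (a b c d : Fin (2 * n) → ℂ)

lemma pderiv_inl_quadForm (k : Fin (2 * n)) :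
    pderiv (Sum.inl k) (quadForm n a b c d)
      = C (a k) * linFormBar n b + C (c k) * linFormBar n d := by
  simp only [quadForm, map_add, pderiv_mul, pderiv_inl_linForm, pderiv_inl_linFormBar]
  ring

lemma pderiv_inr_quadForm (k : Fin (2 * n)) :
    pderiv (Sum.inr k) (quadForm n a b c d)
      = C (b k) * linForm n a + C (d k) * linForm n c := by
  simp only [quadForm, map_add, pderiv_mul, pderiv_inr_linForm, pderiv_inr_linFormBar]
  ring

lemma clap_quadForm : clap n (quadForm n a b c d) = C (a ⬝ᵥ b + c ⬝ᵥ d) := by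
  simp only [clap, pderiv_inl_quadForm, map_add, pderiv_C_mul, pderiv_inr_linFormBar,
    dotProduct, map_sum, map_mul, Finset.sum_add_distrib]

lemma gradPairing_quadForm_linFormBar :
    gradPairing n (quadForm n a b c d) (linFormBar n b)
      = C (a ⬝ᵥ b) * linFormBar n b + C (c ⬝ᵥ b) * linFormBar n d := by
  simp only [gradPairing, pderiv_inl_quadForm, pderiv_inr_linFormBar, dotProduct, map_sum,
    map_mul, Finset.sum_mul, ← Finset.sum_add_distrib]
  exact Finset.sum_congr rfl fun _ _ => by ring

lemma gradPairing_quadForm_self :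
    gradPairing n (quadForm n a b c d) (quadForm n a b c d)
      = C (a ⬝ᵥ b) * (linForm n a * linFormBar n b)
        + C (a ⬝ᵥ d) * (linForm n c * linFormBar n b)
        + C (c ⬝ᵥ b) * (linForm n a * linFormBar n d)
        + C (c ⬝ᵥ d) * (linForm n c * linFormBar n d) := by
  simp only [gradPairing, pderiv_inl_quadForm, pderiv_inr_quadForm, dotProduct, map_sum,
    map_mul, Finset.sum_mul, ← Finset.sum_add_distrib]
  exact Finset.sum_congr rfl fun _ _ => by ring

end QuadForm

section KernelLaplacian

variable {n : ℕ} {a b c d : Fin (2 * n) → ℂ} {s : ℂ}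

lemma clap_quadForm_pow (hab : a ⬝ᵥ b = s) (hcd : c ⬝ᵥ d = s) (had : a ⬝ᵥ d = 0)
    (hcb : c ⬝ᵥ b = 0) (k : ℕ) :
    clap n (quadForm n a b c d ^ k)
      = C ((k * (k + 1) : ℕ) * s) * quadForm n a b c d ^ (k - 1) := by
  set T := quadForm n a b c d
  have hΓ : gradPairing n T T = C s * T := by
    rw [gradPairing_quadForm_self, hab, hcd, had, hcb]
    simp only [T, quadForm, map_zero]
    ring
  induction k with
  | zero => simp [clap]
  | succ k ih =>
    rw [pow_succ, clap_mul, ih, clap_quadForm, hab, hcd, gradPairing_pow_left,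
      gradPairing_pow_right, hΓ]
    -- `T ^ (k - 1) * T = T ^ k` needs `k ≠ 0`; for `k = 0` its coefficient vanishes
    rcases k with _ | k <;> push_cast [Nat.add_sub_cancel] <;>
      simp only [map_add, map_mul, map_natCast, map_ofNat, map_zero, map_one] <;> ring

lemma clap_linFormBar_pow_mul_quadForm_pow (hab : a ⬝ᵥ b = s) (hcd : c ⬝ᵥ d = s)
    (had : a ⬝ᵥ d = 0) (hcb : c ⬝ᵥ b = 0) (m k : ℕ) :
    clap n (linFormBar n b ^ m * quadForm n a b c d ^ k)
      = C ((k * (m + k + 1) : ℕ) * s)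
          * (linFormBar n b ^ m * quadForm n a b c d ^ (k - 1)) := by
  have hM : ∀ j, pderiv (Sum.inl j) (linFormBar n b ^ m) = 0 := fun j => by
    rw [pderiv_pow, pderiv_inl_linFormBar, mul_zero]
  rw [clap_mul, clap_eq_zero_of_pderiv_inl hM, gradPairing_eq_zero_of_pderiv_inl hM,
    clap_quadForm_pow hab hcd had hcb, gradPairing_pow_left, gradPairing_pow_right,
    gradPairing_quadForm_linFormBar, hab, hcb]
  rcases m with _ | m <;> push_cast [Nat.add_sub_cancel] <;>
    simp only [map_add, map_mul, map_natCast, map_zero, map_one] <;> ring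

lemma iterate_clap_linFormBar_pow_mul_quadForm_pow (hab : a ⬝ᵥ b = s) (hcd : c ⬝ᵥ d = s)
    (had : a ⬝ᵥ d = 0) (hcb : c ⬝ᵥ b = 0) (e : ℂ) (m k j : ℕ) :
    (clap n)^[j] (C e * (linFormBar n b ^ m * quadForm n a b c d ^ k))
      = C (e * (k.descFactorial j * (m + k + 1).descFactorial j : ℕ) * s ^ j)
          * (linFormBar n b ^ m * quadForm n a b c d ^ (k - j)) := by
  induction j with
  | zero => simp
  | succ j ih =>
    have hcoeff :
        (k - j) * (m + (k - j) + 1) * (k.descFactorial j * (m + k + 1).descFactorial j)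
          = k.descFactorial (j + 1) * (m + k + 1).descFactorial (j + 1) := by
      rw [Nat.descFactorial_succ, Nat.descFactorial_succ]
      rcases le_or_gt j k with hjk | hjk
      · rw [show m + (k - j) + 1 = m + k + 1 - j by omega]
        ring
      · simp [Nat.sub_eq_zero_of_le hjk.le]
    rw [Function.iterate_succ_apply', ih, clap_C_mul,
      clap_linFormBar_pow_mul_quadForm_pow hab hcd had hcb, ← mul_assoc, ← map_mul,
      Nat.sub_sub, ← hcoeff]
    push_cast
    congr 2
    ring

end KernelLaplacian

section Symplectic

variable {n : ℕ} (u : Fin (2 * n) → ℂ)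

lemma sum_fin_two_mul {M : Type*} [AddCommMonoid M] (f : Fin (2 * n) → M) :
    ∑ j, f j = ∑ j : Fin n, f (il n j) + ∑ j : Fin n, f (ir n j) := by
  rw [← Fin.sum_congr' f (two_mul n).symm, Fin.sum_univ_add]
  rfl

def sympDual (n : ℕ) (u : Fin (2 * n) → ℂ) (j : Fin (2 * n)) : ℂ :=
  if h : (j : ℕ) < n then u ⟨n + j, by omega⟩ else -u ⟨j - n, by omega⟩

lemma sympDual_il (j : Fin n) : sympDual n u (il n j) = u (ir n j) :=
  dif_pos j.2

lemma sympDual_ir (j : Fin n) : sympDual n u (ir n j) = -u (il n j) := by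
  rw [sympDual, dif_neg (by simp [ir])]
  simp [il, ir]

lemma Cpoly_eq_linForm : Cpoly n u = linForm n (sympDual n u) := by
  rw [linForm, sum_fin_two_mul, Cpoly, ← Finset.sum_add_distrib]
  refine Finset.sum_congr rfl fun j _ => ?_
  rw [sympDual_il, sympDual_ir, map_neg]
  ring

lemma Cbarpoly_eq_linFormBar : Cbarpoly n u = linFormBar n (star (sympDual n u)) := by
  rw [linFormBar, sum_fin_two_mul, Cbarpoly, ← Finset.sum_add_distrib]
  refine Finset.sum_congr rfl fun j _ => ?_
  rw [Pi.star_apply, Pi.star_apply, sympDual_il, sympDual_ir, star_neg, map_neg,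
    starRingEnd_apply, starRingEnd_apply]
  ring

lemma sympDual_dotProduct_self : sympDual n u ⬝ᵥ u = 0 := by
  rw [dotProduct, sum_fin_two_mul, ← Finset.sum_add_distrib]
  refine Finset.sum_eq_zero fun j _ => ?_
  rw [sympDual_il, sympDual_ir]
  ring

lemma star_dotProduct_star_sympDual : star u ⬝ᵥ star (sympDual n u) = 0 := by
  rw [Matrix.star_dotProduct_star, sympDual_dotProduct_self, star_zero]

lemma star_dotProduct_self : star u ⬝ᵥ u = u2 n u :=
  dotProduct_comm _ _

lemma sympDual_dotProduct_star : sympDual n u ⬝ᵥ star (sympDual n u) = u2 n u := by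
  rw [dotProduct, u2, sum_fin_two_mul, sum_fin_two_mul, add_comm]
  simp only [Pi.star_apply, sympDual_il, sympDual_ir, star_neg, neg_mul_neg]
  rfl

lemma quadForm_sympDual :
    quadForm n (star u) u (sympDual n u) (star (sympDual n u))
      = Apoly n u * Bpoly n u + Cpoly n u * Cbarpoly n u := by
  rw [Cpoly_eq_linForm, Cbarpoly_eq_linFormBar]
  rfl

lemma iterate_clap_Zsymp {p q : ℕ} (hpq : p ≤ q) (j : ℕ) :
    (clap n)^[j] (Zsymp n p q u)
      = C ((q - p + 1 : ℕ) / (p.factorial * (q + 1).factorial : ℂ)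
            * (p.descFactorial j * (q + 1).descFactorial j : ℕ) * u2 n u ^ j)
          * (Bpoly n u ^ (q - p)
              * (Apoly n u * Bpoly n u + Cpoly n u * Cbarpoly n u) ^ (p - j)) := by
  rw [Zsymp, ← quadForm_sympDual, mul_assoc, show Bpoly n u = linFormBar n u from rfl,
    iterate_clap_linFormBar_pow_mul_quadForm_pow (star_dotProduct_self u)
      (sympDual_dotProduct_star u) (star_dotProduct_star_sympDual u) (sympDual_dotProduct_self u),
    show q - p + p + 1 = q + 1 by omega]

end Symplectic

section Binomial

lemma sub_pow_mul_pow_eq_sum {R : Type*} [CommRing R] (T x : R) {j p : ℕ} (hj : j ≤ p) :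
    (T - x) ^ j * T ^ (p - j)
      = ∑ l ∈ Finset.range (p + 1), (-1) ^ l * (j.choose l : R) * x ^ l * T ^ (p - l) := by
  rw [sub_eq_neg_add, add_pow, Finset.sum_mul]
  refine (Finset.sum_congr rfl fun l hl => ?_).trans
    (Finset.sum_subset (Finset.range_subset_range.2 (by omega)) fun l _ hl => ?_)
  · rw [neg_pow, show p - l = (j - l) + (p - j) by grind, pow_add]
    ring
  · rw [Nat.choose_eq_zero_of_lt (by simpa using hl), Nat.cast_zero, mul_zero, zero_mul,
      zero_mul]

lemma sum_choose_mul_choose_mul_choose (N M : ℕ) {p l : ℕ} (hl : l ≤ p) :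
    ∑ j ∈ Finset.range (p + 1), N.choose (p - j) * M.choose j * j.choose l
      = M.choose l * (N + M - l).choose (p - l) := by
  rcases lt_or_ge M l with hMl | hlM
  · rw [Nat.choose_eq_zero_of_lt hMl, zero_mul]
    refine Finset.sum_eq_zero fun j _ => ?_
    rcases lt_or_ge j l with hjl | hlj
    · rw [Nat.choose_eq_zero_of_lt hjl, mul_zero]
    · rw [Nat.choose_eq_zero_of_lt (hMl.trans_le hlj), mul_zero, zero_mul]
  rw [← Finset.sum_range_add_sum_Ico _ (by omega : l ≤ p + 1), Finset.sum_eq_zero, zero_add,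
    Finset.sum_Ico_eq_sum_range, show N + M - l = (M - l) + N by omega, Nat.add_choose_eq,
    Finset.Nat.sum_antidiagonal_eq_sum_range_succ_mk, show p + 1 - l = p - l + 1 by omega,
    Finset.mul_sum]
  · refine Finset.sum_congr rfl fun i _ => ?_
    rw [mul_assoc, Nat.choose_mul (by omega), Nat.add_sub_cancel_left,
      show p - (l + i) = p - l - i by omega]
    ring
  · intro j hj
    rw [Nat.choose_eq_zero_of_lt (Finset.mem_range.1 hj), mul_zero]

lemma sum_choose_mul_sub_pow_mul_pow {R : Type*} [CommRing R] (N M p : ℕ) (T x : R) :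
    ∑ j ∈ Finset.range (p + 1),
        ((N.choose (p - j) * M.choose j : ℕ) : R) * (T - x) ^ j * T ^ (p - j)
      = ∑ l ∈ Finset.range (p + 1),
          (-1) ^ l * ((M.choose l * (N + M - l).choose (p - l) : ℕ) : R) * x ^ l * T ^ (p - l) := by
  calc _ = ∑ j ∈ Finset.range (p + 1), ∑ l ∈ Finset.range (p + 1),
          ((N.choose (p - j) * M.choose j : ℕ) : R)
            * ((-1) ^ l * (j.choose l : R) * x ^ l * T ^ (p - l)) := by
        refine Finset.sum_congr rfl fun j hj => ?_
        rw [mul_assoc, sub_pow_mul_pow_eq_sum T x (Finset.mem_range_succ_iff.1 hj),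
          Finset.mul_sum]
    _ = _ := by
        rw [Finset.sum_comm]
        refine Finset.sum_congr rfl fun l hl => ?_
        rw [← sum_choose_mul_choose_mul_choose N M (Finset.mem_range_succ_iff.1 hl)]
        simp only [Nat.cast_sum, Finset.mul_sum, Finset.sum_mul]
        refine Finset.sum_congr rfl fun j _ => ?_
        push_cast
        ring

end Binomial

lemma betaCoeff_mul_eq {n p q l : ℕ} (hn : 2 ≤ n) (hpq : p ≤ q) (hl : l ≤ p) :
    betaCoeff n p q l * ((q - p + 1 : ℕ) / (p.factorial * (q + 1).factorial : ℂ)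
        * (p.descFactorial l * (q + 1).descFactorial l : ℕ))
      = cConst n p q * ((-1) ^ l
          * ((q + 1).choose l * (p + 2 * n - 3 + (q + 1) - l).choose (p - l) : ℕ)) := by
  obtain ⟨a, ha⟩ : ∃ a, a = p + q + 2 * n - 2 := ⟨_, rfl⟩
  have hdesc : ∀ {m k : ℕ}, k ≤ m → (m.descFactorial k : ℂ) = m.factorial / (m - k).factorial :=
    fun hkm => by
      rw [eq_div_iff (Nat.cast_ne_zero.2 (Nat.factorial_ne_zero _)), mul_comm]
      exact_mod_cast Nat.factorial_mul_descFactorial hkm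
  rw [betaCoeff, cConst, show 2 * n - 1 + p + q = a + 1 by omega,
    show 2 * n - 2 + p + q - l = a - l by omega, show q + 2 * n - 2 = a - p by omega,
    show p + q + 2 * n - 2 = a by omega, show p + 2 * n - 3 + (q + 1) - l = a - l by omega]
  push_cast
  rw [hdesc hl, hdesc (by omega : l ≤ q + 1), Nat.cast_choose ℂ (by omega : l ≤ q + 1),
    Nat.cast_choose ℂ (by omega : p - l ≤ a - l), show a - l - (p - l) = a - p by omega,
    Nat.factorial_succ]
  push_cast
  have hf : ∀ m : ℕ, (m.factorial : ℂ) ≠ 0 := fun m =>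
    Nat.cast_ne_zero.2 (Nat.factorial_ne_zero m)
  field_simp [hf]

theorem statement11 (n p q : ℕ) (hn : 2 ≤ n) (hpq : p ≤ q) (u : Fin (2 * n) → ℂ) :
    (∑ j ∈ Finset.range (p + 1),
        C (betaCoeff n p q j) * r2poly n ^ j * (clap n)^[j] (Zsymp n p q u))
      = C (cConst n p q) * Bpoly n u ^ (q - p) *
          ∑ j ∈ Finset.range (p + 1),
            C ((((p + 2 * n - 3).choose (p - j) : ℕ) : ℂ) * (((q + 1).choose j : ℕ) : ℂ)) *
              ((Apoly n u * Bpoly n u + Cpoly n u * Cbarpoly n u) - r2poly n * C (u2 n u)) ^ j *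
              (Apoly n u * Bpoly n u + Cpoly n u * Cbarpoly n u) ^ (p - j) := by
  set T := Apoly n u * Bpoly n u + Cpoly n u * Cbarpoly n u
  have hexp :=
    sum_choose_mul_sub_pow_mul_pow (p + 2 * n - 3) (q + 1) p T (r2poly n * C (u2 n u))
  simp only [Nat.cast_mul, ← map_natCast C] at hexp
  rw [hexp, Finset.mul_sum]
  refine Finset.sum_congr rfl fun l hl => ?_
  have h := congrArg (C (σ := Fin (2 * n) ⊕ Fin (2 * n)))
    (betaCoeff_mul_eq hn hpq (Finset.mem_range_succ_iff.1 hl))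
  rw [iterate_clap_Zsymp u hpq]
  simp only [map_mul, map_pow, map_neg, map_one, map_natCast, Nat.cast_mul] at h ⊢
  linear_combination (r2poly n ^ l * C (u2 n u) ^ l * Bpoly n u ^ (q - p) * T ^ (p - l)) * h

end
end
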